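/- arXiv:2203.05184 — 4 statements merged into one kernel-verified Lean document; each statement's English description precedes it below -/
import Mathlib

section
/- Let J ∈ C¹(X, ℝ) be such that J(0) = 0 and J satisfies the weak Cerami–Palais–Smale condition (wCPS) at every level β ∈ [0, +∞). Assume there exist constants R₀ > 0, ϱ₀ > 0 and a point e ∈ X such that: (i) for every y ∈ X with ‖y‖_W = R₀ one has J(y) ≥ ϱ₀; (ii) ‖e‖_W > R₀ and J(e) < ϱ₀. Then J has a critical point y ∈ X (i.e., dJ(y) = 0) such that J(y) ≥ ϱ₀. -/
open Filter Topology

/-- `J` satisfies the weak Cerami–Palais–Smale condition at level `β`, where the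
weaker norm on `X` is induced by the continuous (injective) embedding `ι : X → W`. -/
def WeakCPSAt {X W : Type*} [NormedAddCommGroup X] [NormedSpace ℝ X]
    [NormedAddCommGroup W] [NormedSpace ℝ W]
    (ι : X →L[ℝ] W) (J : X → ℝ) (β : ℝ) : Prop :=
  ∀ y : ℕ → X,
    Tendsto (fun n => J (y n)) atTop (𝓝 β) →
    Tendsto (fun n => ‖fderiv ℝ J (y n)‖ * (1 + ‖y n‖)) atTop (𝓝 0) →
    ∃ y₀ : X, (∃ φ : ℕ → ℕ, StrictMono φ ∧
        Tendsto (fun n => ‖ι (y (φ n)) - ι y₀‖) atTop (𝓝 0)) ∧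
      J y₀ = β ∧ fderiv ℝ J y₀ = 0

open Set

set_option linter.unusedSectionVars false
set_option linter.unusedVariables false


section ChainMetric

variable {X : Type*} [NormedAddCommGroup X] [NormedSpace ℝ X]

/-- weighted gauge -/
noncomputable def gge (x y : X) : ℝ := ‖x - y‖ / (1 + max ‖x‖ ‖y‖)

lemma gge_denom_pos (x y : X) : (0:ℝ) < 1 + max ‖x‖ ‖y‖ := by
  have := norm_nonneg x
  have := le_max_left ‖x‖ ‖y‖
  linarith

lemma gge_nonneg (x y : X) : 0 ≤ gge x y :=
  div_nonneg (norm_nonneg _) (gge_denom_pos x y).le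

lemma gge_self (x : X) : gge x x = 0 := by simp [gge]

lemma gge_comm (x y : X) : gge x y = gge y x := by
  simp [gge, norm_sub_rev, max_comm]

lemma gge_le_norm (x y : X) : gge x y ≤ ‖x - y‖ := by
  rw [gge, div_le_iff₀ (gge_denom_pos x y)]
  nlinarith [norm_nonneg (x - y), norm_nonneg x, norm_nonneg y,
    le_max_left ‖x‖ ‖y‖]

/-- sum of gauges along a chain -/
noncomputable def chainSum : X → List X → X → ℝ
  | a, [], b => gge a b
  | a, x :: l, b => gge a x + chainSum x l b

lemma chainSum_nonneg (a : X) (l : List X) (b : X) : 0 ≤ chainSum a l b := by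
  induction l generalizing a with
  | nil => exact gge_nonneg a b
  | cons x l ih => exact add_nonneg (gge_nonneg a x) (ih x)

lemma chainSum_append (a b c : X) (l₁ l₂ : List X) :
    chainSum a (l₁ ++ b :: l₂) c = chainSum a l₁ b + chainSum b l₂ c := by
  induction l₁ generalizing a with
  | nil => rfl
  | cons x l ih => simp [chainSum, ih x, add_assoc]

lemma chainSum_concat (a b c : X) (l : List X) :
    chainSum a (l ++ [b]) c = chainSum a l b + gge b c := by
  induction l generalizing a with
  | nil => rfl
  | cons x l ih => simp [chainSum, ih x, add_assoc]

lemma chainSum_reverse (a : X) (l : List X) (b : X) :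
    chainSum a l b = chainSum b l.reverse a := by
  induction l generalizing a with
  | nil => exact gge_comm a b
  | cons x l ih =>
      simp only [chainSum, List.reverse_cons, ih x, chainSum_concat,
        gge_comm a x]
      ring

/-- chain metric -/
noncomputable def cdist (a b : X) : ℝ :=
  sInf (Set.range fun l : List X => chainSum a l b)

lemma cdist_set_nonempty (a b : X) :
    (Set.range fun l : List X => chainSum a l b).Nonempty := ⟨_, ⟨[], rfl⟩⟩

lemma cdist_set_bdd (a b : X) :
    BddBelow (Set.range fun l : List X => chainSum a l b) := by
  refine ⟨0, fun r hr => ?_⟩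
  obtain ⟨l, rfl⟩ := hr
  exact chainSum_nonneg a l b

lemma cdist_nonneg (a b : X) : 0 ≤ cdist a b :=
  le_csInf (cdist_set_nonempty a b) (fun r hr => by
    obtain ⟨l, rfl⟩ := hr; exact chainSum_nonneg a l b)

lemma cdist_le_chainSum (a b : X) (l : List X) : cdist a b ≤ chainSum a l b :=
  csInf_le (cdist_set_bdd a b) ⟨l, rfl⟩

lemma cdist_le_gge (a b : X) : cdist a b ≤ gge a b := cdist_le_chainSum a b []

lemma cdist_le_norm (a b : X) : cdist a b ≤ ‖a - b‖ :=
  (cdist_le_gge a b).trans (gge_le_norm a b)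

lemma cdist_self (a : X) : cdist a a = 0 :=
  le_antisymm (by simpa [gge_self] using cdist_le_gge a a) (cdist_nonneg a a)

lemma cdist_comm (a b : X) : cdist a b = cdist b a := by
  unfold cdist
  congr 1
  apply Set.Subset.antisymm
  · rintro r ⟨l, rfl⟩
    exact ⟨l.reverse, (chainSum_reverse a l b).symm⟩
  · rintro r ⟨l, rfl⟩
    exact ⟨l.reverse, (chainSum_reverse b l a).symm⟩

lemma cdist_triangle (a b c : X) : cdist a c ≤ cdist a b + cdist b c := by
  refine le_of_forall_pos_le_add fun ε hε => ?_
  obtain ⟨r₁, ⟨l₁, rfl⟩, h₁⟩ := Real.lt_sInf_add_pos (cdist_set_nonempty a b) (half_pos hε)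
  obtain ⟨r₂, ⟨l₂, rfl⟩, h₂⟩ := Real.lt_sInf_add_pos (cdist_set_nonempty b c) (half_pos hε)
  have := cdist_le_chainSum a c (l₁ ++ b :: l₂)
  rw [chainSum_append] at this
  calc cdist a c ≤ chainSum a l₁ b + chainSum b l₂ c := this
    _ ≤ (cdist a b + ε/2) + (cdist b c + ε/2) := by
        exact add_le_add h₁.le h₂.le
    _ = cdist a b + cdist b c + ε := by ring



/-- the potential used for lower bounds on `cdist` -/
noncomputable def phiP (b : X) (R : ℝ) (x : X) : ℝ :=
  min (‖x - b‖ / (2*R+2)) (1/2)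

lemma phiP_le_half (b : X) (R : ℝ) (x : X) : phiP b R x ≤ 1/2 := min_le_right _ _

lemma phiP_self (b : X) {R : ℝ} (hR : 0 ≤ R) : phiP b R b = 0 := by
  simp [phiP]

lemma phiP_eq_half {b : X} {R : ℝ} (hR : 0 ≤ R) (hb : ‖b‖ ≤ R) {x : X}
    (hx : 2*R+1 ≤ ‖x‖) : phiP b R x = 1/2 := by
  have h1 : R + 1 ≤ ‖x - b‖ := by
    have := norm_sub_norm_le x b
    have : ‖x‖ - ‖b‖ ≤ ‖x - b‖ := by
      simpa using norm_sub_norm_le x b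
    linarith
  have h2 : (0:ℝ) < 2*R+2 := by linarith
  apply min_eq_right
  rw [le_div_iff₀ h2]
  linarith

lemma phiP_lip {b : X} {R : ℝ} (hR : 0 ≤ R) (hb : ‖b‖ ≤ R) (a x : X) :
    phiP b R a ≤ gge a x + phiP b R x := by
  have hd : (0:ℝ) < 2*R+2 := by linarith
  by_cases h1 : ‖a‖ ≤ 2*R+1
  · by_cases h2 : ‖x‖ ≤ 2*R+1
    · -- both in ball: use Lipschitz of min in first arg
      have hmaxle : 1 + max ‖a‖ ‖x‖ ≤ 2*R+2 := by
        have := max_le h1 h2; linarith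
      have hgge : ‖a - x‖ / (2*R+2) ≤ gge a x := by
        unfold gge
        exact div_le_div_of_nonneg_left (norm_nonneg _) (gge_denom_pos a x) hmaxle
      have hnorm : ‖a - b‖ ≤ ‖a - x‖ + ‖x - b‖ := norm_sub_le_norm_sub_add_norm_sub a x b
      have key : ‖a - b‖ / (2*R+2) ≤ ‖a - x‖ / (2*R+2) + ‖x - b‖ / (2*R+2) := by
        rw [← add_div]
        gcongr
      calc phiP b R a ≤ min (‖a - x‖ / (2*R+2) + ‖x - b‖ / (2*R+2)) (1/2) := by
            apply min_le_min _ le_rfl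
            exact key
        _ ≤ ‖a - x‖ / (2*R+2) + min (‖x - b‖ / (2*R+2)) (1/2) := by
            rcases le_total (‖x - b‖ / (2*R+2)) (1/2) with h | h
            · rw [min_eq_left h]; exact min_le_left _ _
            · rw [min_eq_right h]
              have : phiP b R a ≤ 1/2 := phiP_le_half b R a
              have h0 : 0 ≤ ‖a - x‖ / (2*R+2) := div_nonneg (norm_nonneg _) hd.le
              calc min (‖a - x‖ / (2*R+2) + ‖x - b‖ / (2*R+2)) (1/2) ≤ 1/2 := min_le_right _ _
                _ ≤ ‖a - x‖ / (2*R+2) + 1/2 := by linarith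
        _ ≤ gge a x + phiP b R x := by
            apply add_le_add hgge le_rfl
    · -- x outside: phiP x = 1/2
      push_neg at h2
      rw [phiP_eq_half hR hb h2.le]
      have := phiP_le_half b R a
      have := gge_nonneg a x
      linarith
  · -- a outside ball: phiP a = 1/2
    push_neg at h1
    rw [phiP_eq_half hR hb h1.le]
    by_cases h2 : 2*R+1 ≤ ‖x‖
    · rw [phiP_eq_half hR hb h2]
      have := gge_nonneg a x
      linarith
    · push_neg at h2
      -- ‖x‖ < 2R+1 < ‖a‖
      have hmax : max ‖a‖ ‖x‖ = ‖a‖ := max_eq_left (by linarith)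
      have hax : ‖a‖ - ‖x‖ ≤ ‖a - x‖ := by simpa using norm_sub_norm_le a x
      have hda : (0:ℝ) < 1 + ‖a‖ := by positivity
      have hgge : (‖a‖ - ‖x‖) / (1 + ‖a‖) ≤ gge a x := by
        unfold gge
        rw [hmax]
        gcongr
      rcases le_total (1/2) (phiP b R x) with h | h
      · have := gge_nonneg a x; linarith
      · -- phiP x = ‖x-b‖/(2R+2)
        have hxb : ‖x‖ - R ≤ ‖x - b‖ := by
          have : ‖x‖ - ‖b‖ ≤ ‖x - b‖ := by simpa using norm_sub_norm_le x b
          linarith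
        have hphix : max 0 (‖x‖ - R) / (2*R+2) ≤ phiP b R x := by
          apply le_min
          · gcongr
            exact max_le (norm_nonneg _) hxb
          · rw [div_le_iff₀ hd]
            have : ‖x‖ - R ≤ R + 1 := by linarith
            have : max 0 (‖x‖ - R) ≤ R + 1 := max_le (by linarith) this
            linarith
        -- main inequality
        have key : 1/2 ≤ (‖a‖ - ‖x‖) / (1 + ‖a‖) + max 0 (‖x‖ - R) / (2*R+2) := by
          set t := ‖a‖
          set s := ‖x‖
          have hs : 0 ≤ s := norm_nonneg x
          have ht : 2*R+1 < t := h1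
          rcases le_total s R with hsR | hsR
          · rw [max_eq_left (by linarith)]
            have : 1/2 ≤ (t - s)/(1+t) := by
              rw [le_div_iff₀ hda]
              linarith
            have h0 : (0:ℝ) ≤ 0 / (2*R+2) := by norm_num
            linarith [this]
          · rw [max_eq_right (by linarith)]
            rw [div_add_div _ _ (by positivity : (1:ℝ)+t ≠ 0) (by positivity : (2:ℝ)*R+2 ≠ 0),
              le_div_iff₀ (by positivity)]
            nlinarith [mul_nonneg (sub_nonneg.mpr ht.le) hs]
        calc (1:ℝ)/2 ≤ (‖a‖ - ‖x‖) / (1 + ‖a‖) + max 0 (‖x‖ - R) / (2*R+2) := key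
          _ ≤ gge a x + phiP b R x := add_le_add hgge hphix

lemma chainSum_ge_phiP {b : X} {R : ℝ} (hR : 0 ≤ R) (hb : ‖b‖ ≤ R) :
    ∀ (l : List X) (a : X), phiP b R a ≤ chainSum a l b := by
  intro l
  induction l with
  | nil =>
      intro a
      have := phiP_lip hR hb a b
      rw [phiP_self b hR] at this
      simpa [chainSum] using this
  | cons x l ih =>
      intro a
      have h1 := phiP_lip hR hb a x
      have h2 := ih x
      simp only [chainSum]
      linarith

lemma phiP_le_cdist {b : X} {R : ℝ} (hR : 0 ≤ R) (hb : ‖b‖ ≤ R) (a : X) :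
    phiP b R a ≤ cdist a b :=
  le_csInf (cdist_set_nonempty a b) (by rintro r ⟨l, rfl⟩; exact chainSum_ge_phiP hR hb l a)

lemma norm_sub_le_cdist {a b : X} {R : ℝ} (hR : 0 ≤ R) (hb : ‖b‖ ≤ R)
    (h : cdist a b < 1/2) : ‖a - b‖ ≤ (2*R+2) * cdist a b := by
  have hp := phiP_le_cdist hR hb a
  have hlt : phiP b R a < 1/2 := lt_of_le_of_lt hp h
  have hd : (0:ℝ) < 2*R+2 := by linarith
  have hu : ‖a - b‖ / (2*R+2) ≤ cdist a b := by
    by_cases hc : ‖a - b‖ / (2*R+2) ≤ 1/2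
    · rwa [phiP, min_eq_left hc] at hp
    · push_neg at hc
      rw [phiP, min_eq_right hc.le] at hlt
      linarith
  rwa [div_le_iff₀ hd, mul_comm] at hu

lemma norm_le_of_cdist {a b : X} {R : ℝ} (hR : 0 ≤ R) (hb : ‖b‖ ≤ R)
    (h : cdist a b < 1/2) : ‖a‖ ≤ 2*R+1 := by
  have hp := phiP_le_cdist hR hb a
  have : phiP b R a < 1/2 := lt_of_le_of_lt hp h
  have hd : (0:ℝ) < 2*R+2 := by linarith
  have hu : ‖a - b‖ / (2*R+2) < 1/2 := by
    by_contra hc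
    push_neg at hc
    rw [phiP, min_eq_right hc] at this
    linarith
  rw [div_lt_iff₀ hd] at hu
  have h2 : ‖a‖ ≤ ‖a - b‖ + ‖b‖ := by
    calc ‖a‖ = ‖a - b + b‖ := by rw [sub_add_cancel]
      _ ≤ ‖a - b‖ + ‖b‖ := norm_add_le _ _
  linarith



end ChainMetric


section PathSpace
set_option linter.unusedSectionVars false
variable {X : Type*} [NormedAddCommGroup X] [NormedSpace ℝ X]

lemma cdist_lipschitz :
    LipschitzWith 2 (fun p : X × X => cdist p.1 p.2) := by
  apply LipschitzWith.of_dist_le_mul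
  rintro ⟨a, b⟩ ⟨a', b'⟩
  simp only
  have h1 : cdist a b ≤ cdist a' b' + (‖a - a'‖ + ‖b - b'‖) := by
    calc cdist a b ≤ cdist a a' + cdist a' b := cdist_triangle _ _ _
      _ ≤ cdist a a' + (cdist a' b' + cdist b' b) := by
          have := cdist_triangle a' b' b; linarith
      _ ≤ ‖a - a'‖ + (cdist a' b' + ‖b' - b‖) := by
          have := cdist_le_norm a a'; have := cdist_le_norm b' b; linarith
      _ = cdist a' b' + (‖a - a'‖ + ‖b - b'‖) := by rw [norm_sub_rev b' b]; ring
  have h2 : cdist a' b' ≤ cdist a b + (‖a - a'‖ + ‖b - b'‖) := by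
    calc cdist a' b' ≤ cdist a' a + cdist a b' := cdist_triangle _ _ _
      _ ≤ cdist a' a + (cdist a b + cdist b b') := by
          have := cdist_triangle a b b'; linarith
      _ ≤ ‖a' - a‖ + (cdist a b + ‖b - b'‖) := by
          have := cdist_le_norm a' a; have := cdist_le_norm b b'; linarith
      _ = cdist a b + (‖a - a'‖ + ‖b - b'‖) := by rw [norm_sub_rev a' a]; ring
  have hd : dist (cdist a b) (cdist a' b') ≤ ‖a - a'‖ + ‖b - b'‖ := by
    rw [Real.dist_eq, abs_le]
    constructor <;> linarith
  have hcoe : ((2 : NNReal) : ℝ) = 2 := by norm_num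
  rw [hcoe, Prod.dist_eq]
  simp only []
  have l1 : ‖a - a'‖ ≤ max (dist a a') (dist b b') := by
    rw [← dist_eq_norm]; exact le_max_left _ _
  have l2 : ‖b - b'‖ ≤ max (dist a a') (dist b b') := by
    rw [← dist_eq_norm]; exact le_max_right _ _
  calc dist (cdist a b) (cdist a' b') ≤ ‖a - a'‖ + ‖b - b'‖ := hd
    _ ≤ 2 * max (dist a a') (dist b b') := by linarith

/-- value functional: max of `J` along a path -/
noncomputable def PhiF (J : X → ℝ) (γ : ℝ → X) : ℝ :=
  sSup ((fun t => J (γ t)) '' Icc (0:ℝ) 1)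

/-- sup-distance between paths w.r.t. the chain metric -/
noncomputable def DD (γ η : ℝ → X) : ℝ :=
  sSup ((fun t => cdist (γ t) (η t)) '' Icc (0:ℝ) 1)

variable {J : X → ℝ} {γ η θ : ℝ → X}

lemma phiF_image_compact (hJ : Continuous J) (hγ : ContinuousOn γ (Icc 0 1)) :
    IsCompact ((fun t => J (γ t)) '' Icc (0:ℝ) 1) :=
  isCompact_Icc.image_of_continuousOn (hJ.comp_continuousOn hγ)

lemma phiF_bddAbove (hJ : Continuous J) (hγ : ContinuousOn γ (Icc 0 1)) :
    BddAbove ((fun t => J (γ t)) '' Icc (0:ℝ) 1) :=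
  (phiF_image_compact hJ hγ).bddAbove

lemma le_phiF (hJ : Continuous J) (hγ : ContinuousOn γ (Icc 0 1)) {t : ℝ}
    (ht : t ∈ Icc (0:ℝ) 1) : J (γ t) ≤ PhiF J γ :=
  le_csSup (phiF_bddAbove hJ hγ) ⟨t, ht, rfl⟩

lemma phiF_le (h : ∀ t ∈ Icc (0:ℝ) 1, J (γ t) ≤ C) : PhiF J γ ≤ C :=
  csSup_le (by exact ⟨J (γ 0), 0, by norm_num, rfl⟩) (by rintro r ⟨t, ht, rfl⟩; exact h t ht)

lemma phiF_attained (hJ : Continuous J) (hγ : ContinuousOn γ (Icc 0 1)) :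
    ∃ t ∈ Icc (0:ℝ) 1, J (γ t) = PhiF J γ := by
  have hne : ((fun t => J (γ t)) '' Icc (0:ℝ) 1).Nonempty :=
    ⟨J (γ 0), 0, by norm_num, rfl⟩
  have := (phiF_image_compact hJ hγ).sSup_mem hne
  obtain ⟨t, ht, h⟩ := this
  exact ⟨t, ht, h⟩

lemma dd_image_compact (hγ : ContinuousOn γ (Icc 0 1)) (hη : ContinuousOn η (Icc 0 1)) :
    IsCompact ((fun t => cdist (γ t) (η t)) '' Icc (0:ℝ) 1) := by
  apply isCompact_Icc.image_of_continuousOn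
  exact cdist_lipschitz.continuous.comp_continuousOn (hγ.prodMk hη)

lemma cdist_le_dd (hγ : ContinuousOn γ (Icc 0 1)) (hη : ContinuousOn η (Icc 0 1))
    {t : ℝ} (ht : t ∈ Icc (0:ℝ) 1) : cdist (γ t) (η t) ≤ DD γ η :=
  le_csSup (dd_image_compact hγ hη).bddAbove ⟨t, ht, rfl⟩

lemma dd_le {C : ℝ} (h : ∀ t ∈ Icc (0:ℝ) 1, cdist (γ t) (η t) ≤ C) : DD γ η ≤ C :=
  csSup_le ⟨cdist (γ 0) (η 0), 0, by norm_num, rfl⟩ (by rintro r ⟨t, ht, rfl⟩; exact h t ht)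

lemma dd_nonneg (hγ : ContinuousOn γ (Icc 0 1)) (hη : ContinuousOn η (Icc 0 1)) :
    0 ≤ DD γ η :=
  (cdist_nonneg (γ 0) (η 0)).trans (cdist_le_dd hγ hη (by norm_num))

lemma dd_comm : DD γ η = DD η γ := by
  have h : (fun t => cdist (γ t) (η t)) = fun t => cdist (η t) (γ t) :=
    funext fun t => cdist_comm _ _
  unfold DD
  rw [h]

lemma dd_self (hγ : ContinuousOn γ (Icc 0 1)) : DD γ γ = 0 :=
  le_antisymm (dd_le (fun t _ => le_of_eq (cdist_self _))) (dd_nonneg hγ hγ)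

lemma dd_triangle (hγ : ContinuousOn γ (Icc 0 1)) (hη : ContinuousOn η (Icc 0 1))
    (hθ : ContinuousOn θ (Icc 0 1)) : DD γ θ ≤ DD γ η + DD η θ :=
  dd_le fun t ht => (cdist_triangle _ (η t) _).trans
    (add_le_add (cdist_le_dd hγ hη ht) (cdist_le_dd hη hθ ht))

end PathSpace

section Ekeland
set_option linter.unusedSectionVars false
set_option maxHeartbeats 1000000
variable {X : Type*} [NormedAddCommGroup X] [NormedSpace ℝ X] [CompleteSpace X]
  {J : X → ℝ} {e : X}

lemma gamma_complete (hJ : Continuous J) {γ : ℕ → ℝ → X}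
    (hcont : ∀ n, ContinuousOn (γ n) (Icc 0 1))
    (h0 : ∀ n, γ n 0 = 0) (h1 : ∀ n, γ n 1 = e)
    (hC : ∀ δ : ℝ, 0 < δ → ∃ N, ∀ n m, N ≤ n → n ≤ m → DD (γ n) (γ m) ≤ δ) :
    ∃ γb : ℝ → X, ContinuousOn γb (Icc 0 1) ∧ γb 0 = 0 ∧ γb 1 = e ∧
      (∀ t ∈ Icc (0:ℝ) 1, Tendsto (fun n => γ n t) atTop (𝓝 (γb t))) ∧
      Tendsto (fun n => DD (γ n) γb) atTop (𝓝 0) := by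
  obtain ⟨N₀, hN₀⟩ := hC (1/4) (by norm_num)
  obtain ⟨R₀, hR₀⟩ := isCompact_Icc.exists_bound_of_continuousOn (hcont N₀)
  set R := max R₀ 0 with hRdef
  have hR : (0:ℝ) ≤ R := le_max_right _ _
  have hRb : ∀ t ∈ Icc (0:ℝ) 1, ‖γ N₀ t‖ ≤ R := fun t ht => (hR₀ t ht).trans (le_max_left _ _)
  have hbnd : ∀ n, N₀ ≤ n → ∀ t ∈ Icc (0:ℝ) 1, ‖γ n t‖ ≤ 2*R+1 := by
    intro n hn t ht
    have hdd := hN₀ N₀ n le_rfl hn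
    have h1' : cdist (γ n t) (γ N₀ t) < 1/2 := by
      rw [cdist_comm]
      calc cdist (γ N₀ t) (γ n t) ≤ DD (γ N₀) (γ n) := cdist_le_dd (hcont N₀) (hcont n) ht
        _ ≤ 1/4 := hdd
        _ < 1/2 := by norm_num
    exact norm_le_of_cdist hR (hRb t ht) h1'
  -- uniform Cauchy in norm
  have hucauchy : ∀ δ : ℝ, 0 < δ → ∃ N, ∀ n m, N ≤ n → n ≤ m →
      ∀ t ∈ Icc (0:ℝ) 1, ‖γ n t - γ m t‖ ≤ δ := by
    intro δ hδ
    have hδ' : 0 < min (δ/(4*R+6)) (1/4) := by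
      apply lt_min _ (by norm_num)
      apply div_pos hδ (by linarith)
    obtain ⟨N₁, hN₁⟩ := hC _ hδ'
    refine ⟨max N₀ N₁, fun n m hn hnm t ht => ?_⟩
    have hnN₀ : N₀ ≤ n := le_trans (le_max_left _ _) hn
    have hmN₀ : N₀ ≤ m := le_trans hnN₀ hnm
    have hmb : ‖γ m t‖ ≤ 2*R+1 := hbnd m hmN₀ t ht
    have hdd : cdist (γ n t) (γ m t) ≤ min (δ/(4*R+6)) (1/4) :=
      le_trans (cdist_le_dd (hcont n) (hcont m) ht) (hN₁ n m (le_trans (le_max_right _ _) hn) hnm)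
    have hlt : cdist (γ n t) (γ m t) < 1/2 :=
      lt_of_le_of_lt (hdd.trans (min_le_right _ _)) (by norm_num)
    have := norm_sub_le_cdist (by linarith : (0:ℝ) ≤ 2*R+1) hmb hlt
    calc ‖γ n t - γ m t‖ ≤ (2*(2*R+1)+2) * cdist (γ n t) (γ m t) := this
      _ ≤ (4*R+4) * (δ/(4*R+6)) := by
          apply mul_le_mul (by linarith) (hdd.trans (min_le_left _ _)) (cdist_nonneg _ _) (by linarith)
      _ ≤ δ := by
          rw [mul_div_assoc', div_le_iff₀ (by linarith : (0:ℝ) < 4*R+6)]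
          nlinarith
  -- limit function
  have : Nonempty X := ⟨0⟩
  set γb : ℝ → X := fun t => limUnder atTop (fun n => γ n t) with hγbdef
  have htt : ∀ t ∈ Icc (0:ℝ) 1, Tendsto (fun n => γ n t) atTop (𝓝 (γb t)) := by
    intro t ht
    have hcs : CauchySeq (fun n => γ n t) := by
      rw [Metric.cauchySeq_iff']
      intro δ hδ
      obtain ⟨N, hN⟩ := hucauchy (δ/2) (half_pos hδ)
      refine ⟨N, fun n hn => ?_⟩
      have := hN N n le_rfl hn t ht
      rw [dist_eq_norm, norm_sub_rev]
      linarith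
    obtain ⟨a, ha⟩ := cauchySeq_tendsto_of_complete hcs
    have : γb t = a := ha.limUnder_eq
    rw [this]; exact ha
  have hunif : ∀ δ : ℝ, 0 < δ → ∃ N, ∀ n, N ≤ n → ∀ t ∈ Icc (0:ℝ) 1,
      ‖γ n t - γb t‖ ≤ δ := by
    intro δ hδ
    obtain ⟨N, hN⟩ := hucauchy (δ/2) (half_pos hδ)
    refine ⟨N, fun n hn t ht => ?_⟩
    have htend : Tendsto (fun m => ‖γ n t - γ m t‖) atTop (𝓝 ‖γ n t - γb t‖) :=
      ((tendsto_const_nhds.sub (htt t ht)).norm)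
    apply le_of_tendsto htend
    filter_upwards [eventually_ge_atTop n] with m hm
    exact (hN n m hn hm t ht).trans (by linarith)
  have hb0 : γb 0 = 0 := by
    have heq : (fun n => γ n 0) = fun _ => (0:X) := funext h0
    have : Tendsto (fun n => γ n 0) atTop (𝓝 (0:X)) := by rw [heq]; exact tendsto_const_nhds
    exact this.limUnder_eq
  have hb1 : γb 1 = e := by
    have heq : (fun n => γ n 1) = fun _ => e := funext h1
    have : Tendsto (fun n => γ n 1) atTop (𝓝 e) := by rw [heq]; exact tendsto_const_nhds
    exact this.limUnder_eq
  have hcb : ContinuousOn γb (Icc 0 1) := by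
    have hTU : TendstoUniformlyOn (fun n t => γ n t) γb atTop (Icc 0 1) := by
      rw [Metric.tendstoUniformlyOn_iff]
      intro δ hδ
      obtain ⟨N, hN⟩ := hunif (δ/2) (half_pos hδ)
      filter_upwards [eventually_ge_atTop N] with n hn t ht
      rw [dist_eq_norm, norm_sub_rev]
      exact lt_of_le_of_lt (hN n hn t ht) (by linarith)
    exact hTU.continuousOn (Eventually.of_forall fun n => hcont n).frequently
  refine ⟨γb, hcb, hb0, hb1, htt, ?_⟩
  rw [Metric.tendsto_atTop]
  intro δ hδ
  obtain ⟨N, hN⟩ := hunif (δ/2) (half_pos hδ)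
  refine ⟨N, fun n hn => ?_⟩
  have hDn : DD (γ n) γb ≤ δ/2 :=
    dd_le fun t ht => (cdist_le_norm _ _).trans (hN n hn t ht)
  rw [Real.dist_eq, sub_zero, abs_of_nonneg (dd_nonneg (hcont n) hcb)]
  linarith

lemma ekeland_path (hJ : Continuous J)
    {γ₀ : ℝ → X} (hγ₀ : ContinuousOn γ₀ (Icc 0 1) ∧ γ₀ 0 = 0 ∧ γ₀ 1 = e)
    {ε σ c : ℝ} (hε : 0 < ε)
    (hc : ∀ γ : ℝ → X, ContinuousOn γ (Icc 0 1) → γ 0 = 0 → γ 1 = e → c ≤ PhiF J γ)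
    (hγ₀c : PhiF J γ₀ ≤ c + σ) :
    ∃ γ : ℝ → X, (ContinuousOn γ (Icc 0 1) ∧ γ 0 = 0 ∧ γ 1 = e) ∧ PhiF J γ ≤ c + σ ∧
      ∀ η : ℝ → X, ContinuousOn η (Icc 0 1) → η 0 = 0 → η 1 = e →
        PhiF J γ ≤ PhiF J η + ε * DD γ η := by
  classical
  set P : (ℝ → X) → Prop := fun γ => ContinuousOn γ (Icc 0 1) ∧ γ 0 = 0 ∧ γ 1 = e with hP
  set F : {γ : ℝ → X // P γ} → ℝ := fun g => PhiF J g.1 with hF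
  have hFlb : ∀ g : {γ : ℝ → X // P γ}, c ≤ F g := fun g => hc g.1 g.2.1 g.2.2.1 g.2.2.2
  set S : {γ : ℝ → X // P γ} → Set {γ : ℝ → X // P γ} :=
    fun g => {h | F h + ε * DD g.1 h.1 ≤ F g} with hS
  have hself : ∀ g, g ∈ S g := by
    intro g
    simp only [hS, mem_setOf_eq, dd_self g.2.1, mul_zero, add_zero, le_refl]
  have hSbdd : ∀ g, BddBelow (F '' S g) := by
    intro g
    refine ⟨c, ?_⟩
    rintro r ⟨h, _, rfl⟩
    exact hFlb h
  have pick : ∀ (g : {γ : ℝ → X // P γ}) (n : ℕ), ∃ h, h ∈ S g ∧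
      F h ≤ sInf (F '' S g) + (1/2)^n := by
    intro g n
    have hne : (F '' S g).Nonempty := ⟨F g, g, hself g, rfl⟩
    obtain ⟨a, ⟨h, hmem, rfl⟩, hlt⟩ := Real.lt_sInf_add_pos hne
      (pow_pos (by norm_num : (0:ℝ) < 1/2) n)
    exact ⟨h, hmem, hlt.le⟩
  set seq : ℕ → {γ : ℝ → X // P γ} :=
    fun n => Nat.rec ⟨γ₀, hγ₀⟩ (fun n g => (pick g n).choose) n with hseqdef
  have hseqS : ∀ n, seq (n+1) = (pick (seq n) n).choose := fun n => rfl
  have hmem : ∀ n, seq (n+1) ∈ S (seq n) := by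
    intro n; rw [hseqS]; exact (pick (seq n) n).choose_spec.1
  have happ : ∀ n, F (seq (n+1)) ≤ sInf (F '' S (seq n)) + (1/2)^n := by
    intro n; rw [hseqS]; exact (pick (seq n) n).choose_spec.2
  have hdec : ∀ n, F (seq (n+1)) ≤ F (seq n) := by
    intro n
    have := hmem n
    simp only [hS, mem_setOf_eq] at this
    nlinarith [dd_nonneg (seq n).2.1 (seq (n+1)).2.1, hε.le]
  have hanti : Antitone (fun n => F (seq n)) := antitone_nat_of_succ_le hdec
  have hbddB : BddBelow (range fun n => F (seq n)) := ⟨c, by rintro r ⟨n, rfl⟩; exact hFlb _⟩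
  set L : ℝ := ⨅ n, F (seq n) with hLdef
  have htendL : Tendsto (fun n => F (seq n)) atTop (𝓝 L) := tendsto_atTop_ciInf hanti hbddB
  have hLle : ∀ n, L ≤ F (seq n) := fun n => ciInf_le hbddB n
  have htel : ∀ n m, n ≤ m → ε * DD (seq n).1 (seq m).1 ≤ F (seq n) - F (seq m) := by
    intro n m hnm
    induction m, hnm using Nat.le_induction with
    | base => rw [dd_self (seq n).2.1]; simp
    | succ m hnm ih =>
        have h1 := hmem m
        simp only [hS, mem_setOf_eq] at h1
        have h2 : DD (seq n).1 (seq (m+1)).1 ≤ DD (seq n).1 (seq m).1 + DD (seq m).1 (seq (m+1)).1 :=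
          dd_triangle (seq n).2.1 (seq m).2.1 (seq (m+1)).2.1
        have h3 : ε * DD (seq n).1 (seq (m+1)).1 ≤
            ε * DD (seq n).1 (seq m).1 + ε * DD (seq m).1 (seq (m+1)).1 := by
          rw [← mul_add]
          exact mul_le_mul_of_nonneg_left h2 hε.le
        linarith
  have hcauchy : ∀ δ : ℝ, 0 < δ → ∃ N, ∀ n m, N ≤ n → n ≤ m →
      DD (seq n).1 (seq m).1 ≤ δ := by
    intro δ hδ
    have : ∀ᶠ n in atTop, F (seq n) - L < ε * δ := by
      have h2 : Tendsto (fun n => F (seq n) - L) atTop (𝓝 0) := by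
        simpa using htendL.sub (tendsto_const_nhds (x := L))
      have := h2.eventually (eventually_lt_nhds (by positivity : (0:ℝ) < ε * δ))
      simpa using this
    obtain ⟨N, hN⟩ := this.exists_forall_of_atTop
    refine ⟨N, fun n m hn hnm => ?_⟩
    have h1 := htel n m hnm
    have h2 : F (seq n) - F (seq m) ≤ F (seq n) - L := by
      have := hLle m; linarith
    have h3 : ε * DD (seq n).1 (seq m).1 < ε * δ := by
      calc ε * DD (seq n).1 (seq m).1 ≤ F (seq n) - F (seq m) := h1
        _ ≤ F (seq n) - L := h2
        _ < ε * δ := hN n hn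
    exact le_of_lt (lt_of_mul_lt_mul_left h3 hε.le)
  obtain ⟨γb, hcb, hb0, hb1, hpt, hDDto⟩ :=
    gamma_complete (e := e) hJ (fun n => (seq n).2.1) (fun n => (seq n).2.2.1)
      (fun n => (seq n).2.2.2) hcauchy
  set gb : {γ : ℝ → X // P γ} := ⟨γb, hcb, hb0, hb1⟩ with hgb
  have hFgb : F gb ≤ L := by
    obtain ⟨t, ht, heq⟩ := phiF_attained hJ hcb
    have h2 : Tendsto (fun n => J ((seq n).1 t)) atTop (𝓝 (J (γb t))) :=
      (hJ.tendsto _).comp (hpt t ht)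
    have h1 : ∀ n, J ((seq n).1 t) ≤ F (seq n) := fun n => le_phiF hJ (seq n).2.1 ht
    have := le_of_tendsto_of_tendsto' h2 htendL h1
    show PhiF J γb ≤ L
    rw [← heq]; exact this
  have hDgb : ∀ n, ε * DD (seq n).1 γb ≤ F (seq n) - L := by
    intro n
    have htend2 : Tendsto (fun m => F (seq n) - L + ε * DD (seq m).1 γb) atTop
        (𝓝 (F (seq n) - L + ε * 0)) :=
      tendsto_const_nhds.add (hDDto.const_mul ε)
    rw [mul_zero, add_zero] at htend2
    apply ge_of_tendsto htend2
    filter_upwards [eventually_ge_atTop n] with m hm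
    have h1 : DD (seq n).1 γb ≤ DD (seq n).1 (seq m).1 + DD (seq m).1 γb :=
      dd_triangle (seq n).2.1 (seq m).2.1 hcb
    have h2 := htel n m hm
    have h3 := hLle m
    nlinarith [hε.le]
  refine ⟨γb, ⟨hcb, hb0, hb1⟩, ?_, ?_⟩
  · have h0 : F (seq 0) = PhiF J γ₀ := rfl
    have := hLle 0
    calc PhiF J γb = F gb := rfl
      _ ≤ L := hFgb
      _ ≤ F (seq 0) := hLle 0
      _ = PhiF J γ₀ := h0
      _ ≤ c + σ := hγ₀c
  · intro η hη hη0 hη1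
    by_contra hcon
    push_neg at hcon
    set gη : {γ : ℝ → X // P γ} := ⟨η, hη, hη0, hη1⟩ with hgη
    have hmemS : ∀ n, gη ∈ S (seq n) := by
      intro n
      simp only [hS, mem_setOf_eq]
      have h1 : DD (seq n).1 η ≤ DD (seq n).1 γb + DD γb η :=
        dd_triangle (seq n).2.1 hcb hη
      have h2 := hDgb n
      have h3 : PhiF J η + ε * DD γb η < PhiF J γb := hcon
      have h4 : F gb ≤ L := hFgb
      have h5 : ε * DD (seq n).1 η ≤ ε * DD (seq n).1 γb + ε * DD γb η := by
        rw [← mul_add]; exact mul_le_mul_of_nonneg_left h1 hε.le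
      have : F gη = PhiF J η := rfl
      have hgbF : F gb = PhiF J γb := rfl
      nlinarith
    have hFge : ∀ n, L - (1/2)^n ≤ F gη := by
      intro n
      have h1 : sInf (F '' S (seq n)) ≤ F gη := csInf_le (hSbdd (seq n)) ⟨gη, hmemS n, rfl⟩
      have h2 := happ n
      have h3 := hLle (n+1)
      linarith
    have htendp : Tendsto (fun n : ℕ => L - (1/2)^n) atTop (𝓝 L) := by
      have := tendsto_pow_atTop_nhds_zero_of_lt_one (by norm_num : (0:ℝ) ≤ 1/2) (by norm_num)
      simpa using (tendsto_const_nhds (x := L)).sub this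
    have hLleη : L ≤ F gη := le_of_tendsto htendp (Eventually.of_forall hFge)
    have : F gη = PhiF J η := rfl
    have hgbF : F gb = PhiF J γb := rfl
    have hdd0 : 0 ≤ DD γb η := dd_nonneg hcb hη
    nlinarith
end Ekeland

section Analysis
variable {X : Type*} [NormedAddCommGroup X] [NormedSpace ℝ X]

/-- uniform continuity of the derivative near a compact set -/
lemma unif_fderiv {J : X → ℝ} (hJ : ContDiff ℝ 1 J) {K : Set X} (hK : IsCompact K)
    {ε' : ℝ} (hε' : 0 < ε') :
    ∃ δ : ℝ, 0 < δ ∧ ∀ y ∈ K, ∀ z : X, ‖z - y‖ ≤ δ →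
      ‖fderiv ℝ J z - fderiv ℝ J y‖ ≤ ε' := by
  classical
  have hf : Continuous (fderiv ℝ J) := hJ.continuous_fderiv one_ne_zero
  rcases K.eq_empty_or_nonempty with hKe | hKne
  · exact ⟨1, by norm_num, by simp [hKe]⟩
  have hr : ∀ y : X, ∃ r : ℝ, 0 < r ∧ ∀ z : X, dist z y < r →
      ‖fderiv ℝ J z - fderiv ℝ J y‖ < ε'/2 := by
    intro y
    have := Metric.continuousAt_iff.mp (hf.continuousAt (x := y)) (ε'/2) (half_pos hε')
    obtain ⟨r, hr0, hrb⟩ := this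
    exact ⟨r, hr0, fun z hz => by
      have := hrb hz
      rwa [dist_eq_norm] at this⟩
  choose r hr0 hrb using hr
  obtain ⟨t, htK, hcov⟩ := hK.elim_nhds_subcover (fun y => Metric.ball y (r y / 2))
    (fun y _ => Metric.ball_mem_nhds y (by linarith [hr0 y]))
  have htne : t.Nonempty := by
    rcases hKne with ⟨x, hx⟩
    have := hcov hx
    simp only [Finset.mem_coe, mem_iUnion] at this
    obtain ⟨i, hi, _⟩ := this
    exact ⟨i, hi⟩
  set δ : ℝ := t.inf' htne (fun i => r i / 2) with hδdef
  have hδ0 : 0 < δ := by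
    rw [hδdef, Finset.lt_inf'_iff]
    exact fun i _ => by linarith [hr0 i]
  refine ⟨δ, hδ0, fun y hy z hz => ?_⟩
  have := hcov hy
  simp only [mem_iUnion] at this
  obtain ⟨i, hi, hyi⟩ := this
  have hδle : δ ≤ r i / 2 := Finset.inf'_le _ hi
  have hzi : dist z i < r i := by
    have h1 : dist z y ≤ δ := by rwa [dist_eq_norm]
    have h2 : dist y i < r i / 2 := Metric.mem_ball.mp hyi
    calc dist z i ≤ dist z y + dist y i := dist_triangle _ _ _
      _ < δ + r i / 2 := by linarith
      _ ≤ r i := by linarith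
  have hyi' : dist y i < r i := by
    have := Metric.mem_ball.mp hyi; linarith
  have h1 := hrb i z hzi
  have h2 := hrb i y hyi'
  calc ‖fderiv ℝ J z - fderiv ℝ J y‖
      ≤ ‖fderiv ℝ J z - fderiv ℝ J i‖ + ‖fderiv ℝ J i - fderiv ℝ J y‖ := by
        have := norm_sub_le_norm_sub_add_norm_sub (fderiv ℝ J z) (fderiv ℝ J i) (fderiv ℝ J y)
        exact this
    _ ≤ ε' := by rw [norm_sub_rev (fderiv ℝ J y)] at h2; linarith

/-- mean value decrement estimate -/
lemma mvt_decr {J : X → ℝ} (hJ : ContDiff ℝ 1 J) (y w : X) {ε₂ : ℝ}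
    (hb : ∀ s ∈ Icc (0:ℝ) 1, ‖fderiv ℝ J (y - s • w) - fderiv ℝ J y‖ ≤ ε₂) :
    J (y - w) ≤ J y - fderiv ℝ J y w + ε₂ * ‖w‖ := by
  set g : ℝ → ℝ := fun s => J (y - s • w) with hgdef
  have hderiv : ∀ s : ℝ, HasDerivAt g (-(fderiv ℝ J (y - s • w)) w) s := by
    intro s
    have hc : HasDerivAt (fun s : ℝ => y - s • w) (-w) s := by
      have h1 : HasDerivAt (fun s : ℝ => s • w) ((1:ℝ) • w) s :=
        (hasDerivAt_id s).smul_const w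
      rw [one_smul] at h1
      exact ((hasDerivAt_const s y).sub h1).congr_deriv (zero_sub w)
    have hdiff := (hJ.differentiable one_ne_zero (y - s • w)).hasFDerivAt
    have := hdiff.comp_hasDerivAt s hc
    exact this.congr_deriv (map_neg _ w)
  obtain ⟨ξ, hξ, heq⟩ := exists_hasDerivAt_eq_slope g
    (fun s => -(fderiv ℝ J (y - s • w)) w) (by norm_num : (0:ℝ) < 1)
    (Continuous.continuousOn (by
      have : Continuous (fun s : ℝ => y - s • w) := by continuity
      exact (hJ.continuous).comp this))
    (fun x _ => hderiv x)
  have hg1 : g 1 = J (y - w) := by simp [hgdef]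
  have hg0 : g 0 = J y := by simp [hgdef]
  have hslope : g 1 - g 0 = -(fderiv ℝ J (y - ξ • w)) w := by
    rw [heq]; ring
  have hbnd : -(fderiv ℝ J (y - ξ • w)) w ≤ -(fderiv ℝ J y) w + ε₂ * ‖w‖ := by
    have h1 : -(fderiv ℝ J (y - ξ • w)) w + (fderiv ℝ J y) w =
        (fderiv ℝ J y - fderiv ℝ J (y - ξ • w)) w := by
      simp [ContinuousLinearMap.sub_apply]; ring
    have h2 : (fderiv ℝ J y - fderiv ℝ J (y - ξ • w)) w ≤
        ‖fderiv ℝ J y - fderiv ℝ J (y - ξ • w)‖ * ‖w‖ := by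
      calc (fderiv ℝ J y - fderiv ℝ J (y - ξ • w)) w
          ≤ |(fderiv ℝ J y - fderiv ℝ J (y - ξ • w)) w| := le_abs_self _
        _ ≤ ‖fderiv ℝ J y - fderiv ℝ J (y - ξ • w)‖ * ‖w‖ :=
            (fderiv ℝ J y - fderiv ℝ J (y - ξ • w)).le_opNorm w
    have h3 : ‖fderiv ℝ J y - fderiv ℝ J (y - ξ • w)‖ ≤ ε₂ := by
      rw [norm_sub_rev]
      exact hb ξ (mem_Icc_of_Ioo hξ)
    have h4 : ‖fderiv ℝ J y - fderiv ℝ J (y - ξ • w)‖ * ‖w‖ ≤ ε₂ * ‖w‖ :=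
      mul_le_mul_of_nonneg_right h3 (norm_nonneg w)
    linarith
  have := hslope
  rw [hg1, hg0] at this
  linarith

/-- choose a descent direction for a functional with norm above a threshold -/
lemma exists_descent {f : X →L[ℝ] ℝ} {a : ℝ} (ha : 0 < a) (h : a < ‖f‖) :
    ∃ u : X, ‖u‖ ≤ 1 ∧ f u ≤ -a := by
  obtain ⟨x, hx, hfx⟩ := f.exists_lt_apply_of_lt_opNorm h
  rcases le_or_gt (f x) 0 with hle | hlt
  · refine ⟨x, hx.le, ?_⟩
    have : |f x| = -(f x) := abs_of_nonpos hle
    linarith [hfx.le.trans this.le]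
  · refine ⟨-x, by simpa using hx.le, ?_⟩
    have : |f x| = f x := abs_of_pos hlt
    rw [map_neg]
    linarith [hfx.le.trans this.le]

end Analysis

set_option maxHeartbeats 1600000 in
/-- Generalized Mountain Pass Theorem under the weak Cerami–Palais–Smale condition. -/
theorem mountain_pass_wCPS {X W : Type*}
    [NormedAddCommGroup X] [NormedSpace ℝ X] [CompleteSpace X]
    [NormedAddCommGroup W] [NormedSpace ℝ W] [CompleteSpace W]
    (ι : X →L[ℝ] W) (hι : Function.Injective ι)
    (J : X → ℝ) (hJ : ContDiff ℝ 1 J) (hJ0 : J 0 = 0)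
    (hwCPS : ∀ β : ℝ, 0 ≤ β → WeakCPSAt ι J β)
    (R₀ ϱ₀ : ℝ) (hR₀ : 0 < R₀) (hϱ₀ : 0 < ϱ₀)
    (hgeom₁ : ∀ y : X, ‖ι y‖ = R₀ → ϱ₀ ≤ J y)
    (e : X) (he₁ : R₀ < ‖ι e‖) (he₂ : J e < ϱ₀) :
    ∃ y : X, fderiv ℝ J y = 0 ∧ ϱ₀ ≤ J y := by
  classical
  by_contra hcon
  push_neg at hcon
  have hJc : Continuous J := hJ.continuous
  -- the path value set
  set S₀ : Set ℝ :=
    (fun γ : ℝ → X => PhiF J γ) '' {γ | ContinuousOn γ (Icc 0 1) ∧ γ 0 = 0 ∧ γ 1 = e}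
    with hS₀def
  have hseg : ContinuousOn (fun t : ℝ => t • e) (Icc 0 1) :=
    (continuous_id.smul continuous_const).continuousOn
  have hS₀ne : S₀.Nonempty :=
    ⟨PhiF J (fun t : ℝ => t • e), ⟨fun t : ℝ => t • e, ⟨hseg, zero_smul ℝ e, one_smul ℝ e⟩, rfl⟩⟩
  -- every path crosses the sphere ‖ι y‖ = R₀
  have hlow : ∀ γ : ℝ → X, ContinuousOn γ (Icc 0 1) → γ 0 = 0 → γ 1 = e →
      ϱ₀ ≤ PhiF J γ := by
    intro γ hγ h0 h1
    have hf : ContinuousOn (fun t => ‖ι (γ t)‖) (Icc 0 1) :=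
      (ι.continuous.comp_continuousOn hγ).norm
    have hmem : R₀ ∈ Icc ‖ι (γ 0)‖ ‖ι (γ 1)‖ := by
      rw [h0, h1, map_zero, norm_zero]
      exact ⟨hR₀.le, he₁.le⟩
    have := intermediate_value_Icc (zero_le_one) hf hmem
    obtain ⟨t, ht, hteq⟩ := this
    exact (hgeom₁ (γ t) hteq).trans (le_phiF hJc hγ ht)
  have hS₀bdd : BddBelow S₀ := by
    refine ⟨ϱ₀, ?_⟩
    rintro r ⟨γ, ⟨hγ, h0, h1⟩, rfl⟩
    exact hlow γ hγ h0 h1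
  set c : ℝ := sInf S₀ with hcdef
  have hc : ϱ₀ ≤ c := by
    apply le_csInf hS₀ne
    rintro r ⟨γ, ⟨hγ, h0, h1⟩, rfl⟩
    exact hlow γ hγ h0 h1
  have hc_le : ∀ γ : ℝ → X, ContinuousOn γ (Icc 0 1) → γ 0 = 0 → γ 1 = e →
      c ≤ PhiF J γ := fun γ hγ h0 h1 => csInf_le hS₀bdd ⟨γ, ⟨hγ, h0, h1⟩, rfl⟩
  -- the band lower bound on the weighted derivative norm
  have hband : ∃ ε₀ : ℝ, 0 < ε₀ ∧
      ∀ y : X, |J y - c| ≤ ε₀ → ε₀ ≤ ‖fderiv ℝ J y‖ * (1 + ‖y‖) := by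
    by_contra hb
    push_neg at hb
    have hsel : ∀ n : ℕ, ∃ y : X, |J y - c| ≤ 1/(n+1) ∧ ‖fderiv ℝ J y‖ * (1 + ‖y‖) < 1/(n+1) :=
      fun n => hb (1/(n+1)) (by positivity)
    choose Y hY1 hY2 using hsel
    have hlim : Tendsto (fun n : ℕ => (1:ℝ)/(n+1)) atTop (𝓝 0) :=
      tendsto_one_div_add_atTop_nhds_zero_nat
    have hJt : Tendsto (fun n => J (Y n)) atTop (𝓝 c) := by
      have h1 : Tendsto (fun n => J (Y n) - c) atTop (𝓝 0) :=
        squeeze_zero_norm (fun n => by simpa [Real.norm_eq_abs] using hY1 n) hlim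
      have := h1.add (tendsto_const_nhds (x := c))
      simpa using this
    have hwt : Tendsto (fun n => ‖fderiv ℝ J (Y n)‖ * (1 + ‖Y n‖)) atTop (𝓝 0) := by
      apply squeeze_zero (fun n => ?_) (fun n => (hY2 n).le) hlim
      have : (0:ℝ) ≤ 1 + ‖Y n‖ := by positivity
      exact mul_nonneg (norm_nonneg _) this
    obtain ⟨y₀, _, hJy₀, hdy₀⟩ := hwCPS c (hϱ₀.le.trans hc) Y hJt hwt
    have := hcon y₀ hdy₀
    rw [hJy₀] at this
    linarith
  obtain ⟨ε₀, hε₀, hbd⟩ := hband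
  -- choose parameters
  set σ : ℝ := min (min (ε₀/4) (ϱ₀/4)) ((c - J e)/4) with hσdef
  have hcJe : 0 < c - J e := by linarith
  have hσ0 : 0 < σ := by
    apply lt_min (lt_min (by linarith) (by linarith)) (by linarith)
  have hσε₀ : σ ≤ ε₀/4 := le_trans (min_le_left _ _) (min_le_left _ _)
  have hσϱ₀ : σ ≤ ϱ₀/4 := le_trans (min_le_left _ _) (min_le_right _ _)
  have hσJe : σ ≤ (c - J e)/4 := min_le_right _ _
  -- near optimal initial path
  obtain ⟨r₀, ⟨γ₀, hγ₀P, rfl⟩, hγ₀c⟩ := Real.lt_sInf_add_pos hS₀ne hσ0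
  -- Ekeland
  obtain ⟨γ, ⟨hγcont, hγ0, hγ1⟩, hγΦ, hγstab⟩ :=
    ekeland_path (e := e) hJc hγ₀P (by positivity : (0:ℝ) < ε₀/8) hc_le hγ₀c.le
  have hΦγc : c ≤ PhiF J γ := hc_le γ hγcont hγ0 hγ1
  -- compact image and bounds
  have hK : IsCompact (γ '' Icc 0 1) := isCompact_Icc.image_of_continuousOn hγcont
  obtain ⟨R₂', hR₂'⟩ := hK.exists_bound_of_continuousOn continuousOn_id
  set R₂ : ℝ := max R₂' 0 with hR₂def
  have hR₂0 : (0:ℝ) ≤ R₂ := le_max_right _ _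
  have hR₂b : ∀ t ∈ Icc (0:ℝ) 1, ‖γ t‖ ≤ R₂ := by
    intro t ht
    exact le_trans (hR₂' (γ t) (mem_image_of_mem γ ht)) (le_max_left _ _)
  set ε₂ : ℝ := ε₀ / (8 * (1 + R₂)) with hε₂def
  have hε₂0 : 0 < ε₂ := by positivity
  obtain ⟨δ₂, hδ₂0, hδ₂⟩ := unif_fderiv hJ hK hε₂0
  -- the near-top compact set
  set KT : Set X := (γ '' Icc 0 1) ∩ J ⁻¹' (Ici (c - 2*σ)) with hKTdef
  have hKTc : IsCompact KT := hK.inter_right (isClosed_Ici.preimage hJc)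
  have hKTband : ∀ z ∈ KT, ε₀ ≤ ‖fderiv ℝ J z‖ * (1 + ‖z‖) := by
    rintro z ⟨⟨t, ht, rfl⟩, hz2⟩
    apply hbd
    have h1 : c - 2*σ ≤ J (γ t) := hz2
    have h2 : J (γ t) ≤ c + σ := (le_phiF hJc hγcont ht).trans hγΦ
    rw [abs_le]
    constructor <;> linarith
  -- descent directions
  have hsel : ∀ z : X, ∃ (u : X) (r : ℝ), 0 < r ∧ ‖u‖ ≤ 1 ∧ (z ∈ KT →
      ∀ z' : X, dist z' z < 3*r → fderiv ℝ J z' ((1 + ‖z'‖) • u) ≤ -(ε₀/2)) := by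
    intro z
    by_cases hz : z ∈ KT
    · have hz1 : (0:ℝ) < 1 + ‖z‖ := by positivity
      have hnz : (3/4)*ε₀/(1+‖z‖) < ‖fderiv ℝ J z‖ := by
        rw [div_lt_iff₀ hz1]
        have := hKTband z hz
        nlinarith
      obtain ⟨u, hu1, hu2⟩ := exists_descent (by positivity) hnz
      have hGz : fderiv ℝ J z ((1 + ‖z‖) • u) ≤ -((3/4)*ε₀) := by
        rw [map_smul]
        have : (1 + ‖z‖) * fderiv ℝ J z u ≤ (1 + ‖z‖) * (-((3/4)*ε₀/(1+‖z‖))) :=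
          mul_le_mul_of_nonneg_left hu2 hz1.le
        rw [mul_neg, mul_div_cancel₀] at this
        · exact this
        · exact ne_of_gt hz1
      -- continuity of z' ↦ fderiv J z' ((1+‖z'‖) • u)
      have hGcont : Continuous fun z' : X => fderiv ℝ J z' ((1 + ‖z'‖) • u) := by
        have h1 : Continuous fun z' : X => fderiv ℝ J z' := hJ.continuous_fderiv one_ne_zero
        have h2 : Continuous fun z' : X => (1 + ‖z'‖) • u :=
          (continuous_const.add continuous_norm).smul continuous_const
        exact h1.clm_apply h2
      have := Metric.continuousAt_iff.mp (hGcont.continuousAt (x := z)) (ε₀/4) (by positivity)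
      obtain ⟨r₁, hr₁0, hr₁⟩ := this
      refine ⟨u, r₁/3, by positivity, hu1, fun _ z' hz' => ?_⟩
      have hd : dist z' z < r₁ := by
        have : 3 * (r₁/3) = r₁ := by ring
        rwa [this] at hz'
      have := hr₁ hd
      rw [Real.dist_eq, abs_lt] at this
      linarith [this.2]
    · exact ⟨0, 1, one_pos, by simp, fun h => absurd h hz⟩
  choose uD rD hrD0 huD hballD using hsel
  -- finite subcover
  obtain ⟨T, hTmem, hTcov⟩ := hKTc.elim_nhds_subcover (fun z => Metric.ball z (rD z))
    (fun z _ => Metric.ball_mem_nhds z (hrD0 z))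
  -- partition functions
  set ψ : X → X → ℝ := fun i x => max (2 * rD i - dist x i) 0 with hψdef
  have hψ0 : ∀ i x, 0 ≤ ψ i x := fun i x => le_max_right _ _
  have hψcont : ∀ i, Continuous (ψ i) := fun i =>
    ((continuous_const.sub (continuous_id.dist continuous_const)).max continuous_const)
  have hψpos_dist : ∀ i x, 0 < ψ i x → dist x i < 2 * rD i := by
    intro i x h
    rcases le_or_gt (2 * rD i - dist x i) 0 with hle | hlt
    · simp only [hψdef] at h
      simp only [max_eq_right hle] at h
      exact absurd h (lt_irrefl 0)
    · linarith
  set σS : X → ℝ := fun x => ∑ i ∈ T, ψ i x with hσSdef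
  have hσScont : Continuous σS := continuous_finset_sum T (fun i _ => hψcont i)
  have hσS0 : ∀ x, 0 ≤ σS x := fun x => Finset.sum_nonneg fun i _ => hψ0 i x
  have hσSpos : ∀ x ∈ KT, 0 < σS x := by
    intro x hx
    have := hTcov hx
    simp only [mem_iUnion] at this
    obtain ⟨i, hi, hxi⟩ := this
    have hdist : dist x i < rD i := Metric.mem_ball.mp hxi
    apply Finset.sum_pos' (fun j _ => hψ0 j x) ⟨i, hi, ?_⟩
    simp only [hψdef]
    simp only [lt_max_iff]
    left
    linarith [hrD0 i]
  -- vector field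
  set wX : X → X := fun x => if h : 0 < σS x then (σS x)⁻¹ • ∑ i ∈ T, ψ i x • uD i else 0
    with hwXdef
  have hwXnorm : ∀ x, ‖wX x‖ ≤ 1 := by
    intro x
    simp only [hwXdef]
    split_ifs with h
    · rw [norm_smul]
      have h1 : ‖∑ i ∈ T, ψ i x • uD i‖ ≤ ∑ i ∈ T, ψ i x := by
        calc ‖∑ i ∈ T, ψ i x • uD i‖ ≤ ∑ i ∈ T, ‖ψ i x • uD i‖ := norm_sum_le _ _
          _ ≤ ∑ i ∈ T, ψ i x := by
              apply Finset.sum_le_sum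
              intro i _
              rw [norm_smul, Real.norm_eq_abs, abs_of_nonneg (hψ0 i x)]
              calc ψ i x * ‖uD i‖ ≤ ψ i x * 1 := mul_le_mul_of_nonneg_left (huD i) (hψ0 i x)
                _ = ψ i x := mul_one _
      have h2 : ‖(σS x)⁻¹‖ = (σS x)⁻¹ := by
        rw [Real.norm_eq_abs, abs_of_nonneg (inv_nonneg.mpr (hσS0 x))]
      rw [h2]
      calc (σS x)⁻¹ * ‖∑ i ∈ T, ψ i x • uD i‖ ≤ (σS x)⁻¹ * σS x := by
            apply mul_le_mul_of_nonneg_left h1 (inv_nonneg.mpr (hσS0 x))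
        _ = 1 := inv_mul_cancel₀ (ne_of_gt h)
    · simp
  -- cutoff in t
  set χ : ℝ → ℝ := fun s => max 0 (min 1 ((J (γ s) - (c - 2*σ))/σ)) with hχdef
  have hχ0 : ∀ s, 0 ≤ χ s := fun s => le_max_left _ _
  have hχ1 : ∀ s, χ s ≤ 1 := fun s => max_le zero_le_one (min_le_left _ _)
  have hχzero : ∀ s, J (γ s) ≤ c - 2*σ → χ s = 0 := by
    intro s h
    simp only [hχdef]
    apply max_eq_left
    apply le_trans (min_le_right _ _)
    apply div_nonpos_of_nonpos_of_nonneg (by linarith) hσ0.le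
  have hχone : ∀ s, c - σ ≤ J (γ s) → χ s = 1 := by
    intro s h
    simp only [hχdef]
    have : (1:ℝ) ≤ (J (γ s) - (c - 2*σ))/σ := by
      rw [le_div_iff₀ hσ0]
      linarith
    rw [min_eq_left this]
    exact max_eq_right zero_le_one
  have hχcont : ContinuousOn χ (Icc 0 1) := by
    have h1 : ContinuousOn (fun s => (J (γ s) - (c - 2*σ))/σ) (Icc 0 1) :=
      ((hJc.comp_continuousOn hγcont).sub continuousOn_const).div_const σ
    have h2 : ContinuousOn (fun s => min 1 ((J (γ s) - (c - 2*σ))/σ)) (Icc 0 1) :=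
      (continuous_const.min continuous_id).comp_continuousOn h1
    exact (continuous_const.max continuous_id).comp_continuousOn h2
  -- the perturbation parameter
  set lam : ℝ := min (δ₂/(1+R₂)) (σ/ε₀) with hlamdef
  have hlam0 : 0 < lam := lt_min (by positivity) (by positivity)
  have hlamδ₂ : lam * (1+R₂) ≤ δ₂ := by
    have h1 : lam ≤ δ₂/(1+R₂) := min_le_left _ _
    rw [← le_div_iff₀ (by positivity : (0:ℝ) < 1+R₂)]
    exact h1
  have hlamσ : lam * ε₀ ≤ σ := by
    have h1 : lam ≤ σ/ε₀ := min_le_right _ _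
    rw [← le_div_iff₀ hε₀]
    exact h1
  -- the combined field along the path
  set uf : ℝ → X := fun s => χ s • wX (γ s) with hufdef
  have hufnorm : ∀ s, ‖uf s‖ ≤ χ s := by
    intro s
    simp only [hufdef]
    rw [norm_smul, Real.norm_eq_abs, abs_of_nonneg (hχ0 s)]
    calc χ s * ‖wX (γ s)‖ ≤ χ s * 1 := mul_le_mul_of_nonneg_left (hwXnorm (γ s)) (hχ0 s)
      _ = χ s := mul_one _
  have hufnorm1 : ∀ s, ‖uf s‖ ≤ 1 := fun s => (hufnorm s).trans (hχ1 s)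
  -- χ > 0 implies the near-top membership
  have hχKT : ∀ s ∈ Icc (0:ℝ) 1, χ s ≠ 0 → γ s ∈ KT ∧ 0 < σS (γ s) := by
    intro s hs hχs
    have hJs : c - 2*σ < J (γ s) := by
      by_contra hle
      push_neg at hle
      exact hχs (hχzero s hle)
    have hmem : γ s ∈ KT := ⟨mem_image_of_mem γ hs, le_of_lt hJs⟩
    exact ⟨hmem, hσSpos _ hmem⟩
  -- continuity of uf
  have hufcont : ContinuousOn uf (Icc 0 1) := by
    intro s₀ hs₀
    by_cases hpos : 0 < σS (γ s₀)
    · have hopen : IsOpen {x : X | 0 < σS x} := isOpen_lt continuous_const hσScont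
      have hev : ∀ᶠ s in 𝓝[Icc (0:ℝ) 1] s₀, γ s ∈ {x : X | 0 < σS x} :=
        (hγcont s₀ hs₀).preimage_mem_nhdsWithin (hopen.mem_nhds hpos)
      have hg : ContinuousWithinAt
          (fun s => χ s • ((σS (γ s))⁻¹ • ∑ i ∈ T, ψ i (γ s) • uD i)) (Icc 0 1) s₀ := by
        have hA : ContinuousWithinAt (fun s => (σS (γ s))⁻¹) (Icc 0 1) s₀ :=
          (hσScont.continuousAt.comp_continuousWithinAt (hγcont s₀ hs₀)).inv₀
            (ne_of_gt hpos)
        have hsumc : Continuous (fun x : X => ∑ i ∈ T, ψ i x • uD i) :=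
          continuous_finset_sum _ (fun i _ => (hψcont i).smul continuous_const)
        have hB : ContinuousWithinAt (fun s => ∑ i ∈ T, ψ i (γ s) • uD i) (Icc 0 1) s₀ :=
          hsumc.continuousAt.comp_continuousWithinAt (hγcont s₀ hs₀)
        exact (hχcont s₀ hs₀).smul (hA.smul hB)
      apply hg.congr_of_eventuallyEq
      · filter_upwards [hev] with s hs
        simp only [hufdef]
        simp only [hwXdef]
        rw [dif_pos hs]
      · simp only [hufdef]
        simp only [hwXdef]; rw [dif_pos hpos]
    · -- σS (γ s₀) = 0, so χ s₀ = 0 and uf → 0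
      have hσ0' : σS (γ s₀) = 0 := le_antisymm (le_of_not_gt hpos) (hσS0 _)
      have hχs₀ : χ s₀ = 0 := by
        by_contra hne
        exact hpos (hχKT s₀ hs₀ hne).2
      have hufs₀ : uf s₀ = 0 := by simp only [hufdef]; simp [hχs₀]
      have hχt : Tendsto χ (𝓝[Icc (0:ℝ) 1] s₀) (𝓝 0) := by
        have := hχcont s₀ hs₀
        rwa [ContinuousWithinAt, hχs₀] at this
      rw [ContinuousWithinAt, hufs₀]
      exact squeeze_zero_norm hufnorm hχt
  -- the perturbed path
  set η : ℝ → X := fun s => γ s + lam • ((1 + ‖γ s‖) • uf s) with hηdef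
  have hηcont : ContinuousOn η (Icc 0 1) := by
    apply hγcont.add
    apply ContinuousOn.smul continuousOn_const
    exact (continuousOn_const.add hγcont.norm).smul hufcont
  have hη0 : η 0 = 0 := by
    have h0mem : (0:ℝ) ∈ Icc (0:ℝ) 1 := by norm_num
    have : χ 0 = 0 := by
      apply hχzero
      rw [hγ0, hJ0]
      linarith
    simp only [hηdef]
    simp only [hufdef]
    simp [this, hγ0]
  have hη1 : η 1 = e := by
    have : χ 1 = 0 := by
      apply hχzero
      rw [hγ1]
      linarith
    simp only [hηdef]
    simp only [hufdef]
    simp [this, hγ1]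
  -- pointwise descent of the derivative along the field
  have hdesc : ∀ s ∈ Icc (0:ℝ) 1,
      fderiv ℝ J (γ s) ((1 + ‖γ s‖) • uf s) ≤ -(ε₀/2) * χ s := by
    intro s hs
    by_cases hχs : χ s = 0
    · simp only [hufdef]
      simp [hχs]
    · obtain ⟨hmemKT, hσpos⟩ := hχKT s hs hχs
      have hufeq : (1 + ‖γ s‖) • uf s =
          (χ s * (σS (γ s))⁻¹) • ∑ i ∈ T, ψ i (γ s) • ((1 + ‖γ s‖) • uD i) := by
        simp only [hufdef, hwXdef]
        rw [dif_pos hσpos]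
        rw [smul_smul, smul_smul]
        have hterm : ∀ i ∈ T, ψ i (γ s) • ((1 + ‖γ s‖) • uD i)
            = (1 + ‖γ s‖) • (ψ i (γ s) • uD i) := fun i _ => smul_comm _ _ _
        rw [Finset.sum_congr rfl hterm, ← Finset.smul_sum, smul_smul]
        congr 1
        ring
      rw [hufeq, map_smul, map_sum]
      have hsum : ∑ i ∈ T, (fderiv ℝ J (γ s)) (ψ i (γ s) • ((1 + ‖γ s‖) • uD i)) ≤
          ∑ i ∈ T, ψ i (γ s) * (-(ε₀/2)) := by
        apply Finset.sum_le_sum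
        intro i hi
        rw [map_smul]
        rcases eq_or_lt_of_le (hψ0 i (γ s)) with heq | hlt
        · rw [← heq]
          simp
        · have hdist : dist (γ s) i < 2 * rD i := hψpos_dist i (γ s) hlt
          have h3r : dist (γ s) i < 3 * rD i := by linarith [hrD0 i]
          have := hballD i (hTmem i hi) (γ s) h3r
          calc ψ i (γ s) • (fderiv ℝ J (γ s)) ((1 + ‖γ s‖) • uD i)
              = ψ i (γ s) * (fderiv ℝ J (γ s)) ((1 + ‖γ s‖) • uD i) := rfl
            _ ≤ ψ i (γ s) * (-(ε₀/2)) := mul_le_mul_of_nonneg_left this (hψ0 i (γ s))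
      have hsum2 : ∑ i ∈ T, ψ i (γ s) * (-(ε₀/2)) = -(ε₀/2) * σS (γ s) := by
        simp only [hσSdef]
        rw [← Finset.sum_mul]
        ring
      have hscal : 0 ≤ χ s * (σS (γ s))⁻¹ :=
        mul_nonneg (hχ0 s) (inv_nonneg.mpr (hσS0 _))
      calc (χ s * (σS (γ s))⁻¹) • ∑ i ∈ T, (fderiv ℝ J (γ s)) (ψ i (γ s) • ((1 + ‖γ s‖) • uD i))
          = (χ s * (σS (γ s))⁻¹) * ∑ i ∈ T, (fderiv ℝ J (γ s)) (ψ i (γ s) • ((1 + ‖γ s‖) • uD i)) := rfl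
        _ ≤ (χ s * (σS (γ s))⁻¹) * (-(ε₀/2) * σS (γ s)) := by
            rw [← hsum2]
            exact mul_le_mul_of_nonneg_left hsum hscal
        _ = -(ε₀/2) * χ s * ((σS (γ s))⁻¹ * σS (γ s)) := by ring
        _ = -(ε₀/2) * χ s := by
            rw [inv_mul_cancel₀ (ne_of_gt hσpos), mul_one]
  -- per-point value estimate
  have hJη : ∀ s ∈ Icc (0:ℝ) 1, J (η s) ≤ J (γ s) - lam * (ε₀/2) * χ s + lam * (ε₀/8) := by
    intro s hs
    set w : X := lam • ((1 + ‖γ s‖) • uf s) with hwdef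
    have hwnorm : ‖w‖ ≤ lam * (1 + R₂) := by
      rw [hwdef, norm_smul, norm_smul]
      rw [Real.norm_eq_abs, abs_of_nonneg hlam0.le, Real.norm_eq_abs,
        abs_of_nonneg (by positivity : (0:ℝ) ≤ 1 + ‖γ s‖)]
      have h1 : ‖uf s‖ ≤ 1 := hufnorm1 s
      have h2 : 1 + ‖γ s‖ ≤ 1 + R₂ := by linarith [hR₂b s hs]
      calc lam * ((1 + ‖γ s‖) * ‖uf s‖) ≤ lam * ((1 + R₂) * 1) := by
            apply mul_le_mul_of_nonneg_left _ hlam0.le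
            apply mul_le_mul h2 h1 (norm_nonneg _) (by positivity)
        _ = lam * (1 + R₂) := by ring
    have hvar : ∀ τ ∈ Icc (0:ℝ) 1,
        ‖fderiv ℝ J (γ s - τ • (-w)) - fderiv ℝ J (γ s)‖ ≤ ε₂ := by
      intro τ hτ
      apply hδ₂ (γ s) (mem_image_of_mem γ hs)
      have : γ s - τ • (-w) - γ s = τ • w := by
        rw [smul_neg]
        abel
      rw [this, norm_smul, Real.norm_eq_abs, abs_of_nonneg hτ.1]
      calc τ * ‖w‖ ≤ 1 * ‖w‖ := mul_le_mul_of_nonneg_right hτ.2 (norm_nonneg _)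
        _ = ‖w‖ := one_mul _
        _ ≤ lam * (1 + R₂) := hwnorm
        _ ≤ δ₂ := hlamδ₂
    have hmvt := mvt_decr hJ (γ s) (-w) hvar
    have hηeq : η s = γ s - (-w) := by
      simp only [hηdef]; rw [hwdef]
      abel
    rw [← hηeq] at hmvt
    have hfw : fderiv ℝ J (γ s) (-w) = -(lam * (fderiv ℝ J (γ s) ((1 + ‖γ s‖) • uf s))) := by
      rw [hwdef, map_neg, map_smul]
      simp
    have hdesc' := hdesc s hs
    have herr : ε₂ * ‖-w‖ ≤ lam * (ε₀/8) := by
      rw [norm_neg]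
      calc ε₂ * ‖w‖ ≤ ε₂ * (lam * (1 + R₂)) :=
            mul_le_mul_of_nonneg_left hwnorm hε₂0.le
        _ = lam * (ε₂ * (1 + R₂)) := by ring
        _ = lam * (ε₀/8) := by
            congr 1
            rw [hε₂def]
            field_simp
    have hterm : -(fderiv ℝ J (γ s) (-w)) ≤ -(lam * (ε₀/2) * χ s) := by
      rw [hfw, neg_neg]
      calc lam * (fderiv ℝ J (γ s) ((1 + ‖γ s‖) • uf s)) ≤ lam * (-(ε₀/2) * χ s) :=
            mul_le_mul_of_nonneg_left hdesc' hlam0.le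
        _ = -(lam * (ε₀/2) * χ s) := by ring
    linarith
  -- global estimate for the max
  set mmin : ℝ := min ((3/8) * ε₀ * lam) (σ/2) with hmmindef
  have hmmin0 : 0 < mmin := lt_min (by positivity) (by positivity)
  have hmain : ∀ s ∈ Icc (0:ℝ) 1, J (η s) ≤ PhiF J γ - mmin := by
    intro s hs
    rcases le_or_gt (c - σ) (J (γ s)) with htop | hlow'
    · have hχs : χ s = 1 := hχone s htop
      have := hJη s hs
      rw [hχs, mul_one] at this
      have h2 : J (γ s) ≤ PhiF J γ := le_phiF hJc hγcont hs
      have h3 : mmin ≤ (3/8) * ε₀ * lam := min_le_left _ _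
      calc J (η s) ≤ J (γ s) - lam * (ε₀/2) + lam * (ε₀/8) := this
        _ = J (γ s) - (3/8) * ε₀ * lam := by ring
        _ ≤ PhiF J γ - (3/8) * ε₀ * lam := by linarith
        _ ≤ PhiF J γ - mmin := by linarith
    · have := hJη s hs
      have h1 : 0 ≤ lam * (ε₀/2) * χ s := by
        apply mul_nonneg (by positivity) (hχ0 s)
      have h2 : lam * (ε₀/8) ≤ σ/8 := by nlinarith
      have h3 : mmin ≤ σ/2 := min_le_right _ _
      calc J (η s) ≤ J (γ s) + lam * (ε₀/8) := by linarith
        _ ≤ c - σ + σ/8 := by linarith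
        _ ≤ c - σ/2 := by linarith
        _ ≤ PhiF J γ - σ/2 := by linarith
        _ ≤ PhiF J γ - mmin := by linarith
  have hΦη : PhiF J η ≤ PhiF J γ - mmin := phiF_le hmain
  -- distance estimate
  have hDb : DD γ η ≤ lam := by
    apply dd_le
    intro s hs
    apply le_trans (cdist_le_gge _ _)
    rw [gge]
    rw [div_le_iff₀ (gge_denom_pos _ _)]
    have hdiff : γ s - η s = -(lam • ((1 + ‖γ s‖) • uf s)) := by
      simp only [hηdef]
      abel
    rw [hdiff, norm_neg, norm_smul, norm_smul]
    rw [Real.norm_eq_abs, abs_of_nonneg hlam0.le, Real.norm_eq_abs,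
      abs_of_nonneg (by positivity : (0:ℝ) ≤ 1 + ‖γ s‖)]
    have h1 : ‖uf s‖ ≤ 1 := hufnorm1 s
    have h2 : 1 + ‖γ s‖ ≤ 1 + max ‖γ s‖ ‖η s‖ := by
      have := le_max_left ‖γ s‖ ‖η s‖
      linarith
    calc lam * ((1 + ‖γ s‖) * ‖uf s‖) ≤ lam * ((1 + ‖γ s‖) * 1) := by
          apply mul_le_mul_of_nonneg_left _ hlam0.le
          exact mul_le_mul_of_nonneg_left h1 (by positivity)
      _ = lam * (1 + ‖γ s‖) := by ring
      _ ≤ lam * (1 + max ‖γ s‖ ‖η s‖) := by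
          apply mul_le_mul_of_nonneg_left h2 hlam0.le
  -- final contradiction via the Ekeland stability
  have hstab := hγstab η hηcont hη0 hη1
  have hDD0 : 0 ≤ DD γ η := dd_nonneg hγcont hηcont
  have hfinal : PhiF J γ ≤ PhiF J γ - mmin + (ε₀/8) * lam := by
    calc PhiF J γ ≤ PhiF J η + (ε₀/8) * DD γ η := hstab
      _ ≤ (PhiF J γ - mmin) + (ε₀/8) * lam := by
          have h1 : (ε₀/8) * DD γ η ≤ (ε₀/8) * lam :=
            mul_le_mul_of_nonneg_left hDb (by positivity)
          linarith
  have hmgt : (ε₀/8) * lam < mmin := by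
    apply lt_min
    · nlinarith
    · nlinarith
  linarith
end

section
/- Assume A satisfies conditions (h2), (h3), (h4), (h5). Then for every (t, ξ) ∈ ℝ × ℝ^N with |(t, ξ)| ≥ R and every real number s ≥ 1, one has A(st, sξ) ≤ s^{(1/θ)(1 − μ₂/η₁)} A(t, ξ). -/
open scoped RealInnerProductSpace

/-- `a(t, ξ) = ∇_ξ A(t, ξ)`, the gradient of `A` in the `ξ` variable. -/
noncomputable def gradA {N : ℕ} (A : ℝ → EuclideanSpace ℝ (Fin N) → ℝ)
    (t : ℝ) (ξ : EuclideanSpace ℝ (Fin N)) : EuclideanSpace ℝ (Fin N) :=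
  gradient (A t) ξ

/-- `A_t(t, ξ) = ∂A/∂t (t, ξ)`. -/
noncomputable def Adert {N : ℕ} (A : ℝ → EuclideanSpace ℝ (Fin N) → ℝ)
    (t : ℝ) (ξ : EuclideanSpace ℝ (Fin N)) : ℝ :=
  deriv (fun s => A s ξ) t

/-- The Euclidean norm of the pair `(t, ξ) ∈ ℝ × ℝ^N`. -/
noncomputable def pairNorm {N : ℕ} (t : ℝ) (ξ : EuclideanSpace ℝ (Fin N)) : ℝ :=
  Real.sqrt (t ^ 2 + ‖ξ‖ ^ 2)

private lemma hasDerivAt_line {N : ℕ} (A : ℝ → EuclideanSpace ℝ (Fin N) → ℝ)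
    (hA : ContDiff ℝ 1 (fun q : ℝ × EuclideanSpace ℝ (Fin N) => A q.1 q.2))
    (t : ℝ) (ξ : EuclideanSpace ℝ (Fin N)) (u : ℝ) :
    HasDerivAt (fun s => A (s * t) (s • ξ))
      (⟪gradA A (u * t) (u • ξ), ξ⟫ + Adert A (u * t) (u • ξ) * t) u := by
  set F : ℝ × EuclideanSpace ℝ (Fin N) → ℝ := fun q => A q.1 q.2 with hFdef
  have hdF : DifferentiableAt ℝ F (u * t, u • ξ) :=
    (hA.differentiable one_ne_zero) (u * t, u • ξ)
  set L : ℝ × EuclideanSpace ℝ (Fin N) →L[ℝ] ℝ := fderiv ℝ F (u * t, u • ξ) with hL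
  have hγ : HasDerivAt (fun s : ℝ => ((s * t, s • ξ) : ℝ × EuclideanSpace ℝ (Fin N))) (t, ξ) u := by
    simpa using HasDerivAt.prodMk ((hasDerivAt_id u).mul_const t) ((hasDerivAt_id u).smul_const ξ)
  have hLF : HasFDerivAt F L (u * t, u • ξ) := hdF.hasFDerivAt
  have hcomp : HasDerivAt (fun s => A (s * t) (s • ξ)) (L (t, ξ)) u :=
    HasFDerivAt.comp_hasDerivAt (l := F) (l' := L) u hLF hγ
  -- the time partial derivative
  have hAt : HasDerivAt (fun s => A s (u • ξ)) (L (1, 0)) (u * t) := by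
    have h1 : HasDerivAt (fun s : ℝ => ((s, u • ξ) : ℝ × EuclideanSpace ℝ (Fin N))) (1, 0) (u * t) := by
      simpa using HasDerivAt.prodMk (hasDerivAt_id (u * t)) (hasDerivAt_const (u * t) (u • ξ))
    exact hLF.comp_hasDerivAt _ h1
  have hAdert : Adert A (u * t) (u • ξ) = L (1, 0) := hAt.deriv
  -- the gradient in ξ
  have hJ : HasFDerivAt (fun y : EuclideanSpace ℝ (Fin N) => ((u * t, y) : ℝ × EuclideanSpace ℝ (Fin N)))
      ((0 : EuclideanSpace ℝ (Fin N) →L[ℝ] ℝ).prod (ContinuousLinearMap.id ℝ (EuclideanSpace ℝ (Fin N)))) (u • ξ) :=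
    HasFDerivAt.prodMk (hasFDerivAt_const _ _) (hasFDerivAt_id _)
  have hpart : HasFDerivAt (A (u * t))
      (L.comp ((0 : EuclideanSpace ℝ (Fin N) →L[ℝ] ℝ).prod (ContinuousLinearMap.id ℝ (EuclideanSpace ℝ (Fin N))))) (u • ξ) :=
    hLF.comp _ hJ
  have hgradF : HasFDerivAt (A (u * t))
      (InnerProductSpace.toDual ℝ (EuclideanSpace ℝ (Fin N)) (gradA A (u * t) (u • ξ))) (u • ξ) :=
    hasGradientAt_iff_hasFDerivAt.mp hpart.differentiableAt.hasGradientAt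
  have hinner : ⟪gradA A (u * t) (u • ξ), ξ⟫ = L (0, ξ) := by
    have huniq := hgradF.unique hpart
    calc ⟪gradA A (u * t) (u • ξ), ξ⟫
        = InnerProductSpace.toDual ℝ (EuclideanSpace ℝ (Fin N)) (gradA A (u * t) (u • ξ)) ξ :=
          (InnerProductSpace.toDual_apply_apply).symm
      _ = L (0, ξ) := by rw [huniq]; simp
  have hsum : L (t, ξ) = ⟪gradA A (u * t) (u • ξ), ξ⟫ + Adert A (u * t) (u • ξ) * t := by
    rw [hinner, hAdert]
    have hsplit : ((t, ξ) : ℝ × EuclideanSpace ℝ (Fin N))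
        = t • ((1 : ℝ), (0 : EuclideanSpace ℝ (Fin N))) + ((0 : ℝ), ξ) := by
      simp [Prod.ext_iff]
    rw [hsplit, L.map_add, L.map_smul]
    simp only [smul_eq_mul]
    ring
  exact hsum ▸ hcomp

theorem homogeneity_estimate {N : ℕ} (hN : 2 ≤ N)
    (p R lam η₁ η₂ μ₁ θ μ₂ : ℝ) (hp : 1 < p) (hR : 1 ≤ R)
    (A : ℝ → EuclideanSpace ℝ (Fin N) → ℝ)
    (hA : ContDiff ℝ 1 (fun q : ℝ × EuclideanSpace ℝ (Fin N) => A q.1 q.2))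
    -- (h2)
    (hlam : 0 < lam)
    (h2 : ∀ t ξ, lam * ‖ξ‖ ^ p ≤ ⟪gradA A t ξ, ξ⟫)
    -- (h3)
    (hη₁ : 0 < η₁) (hη₂ : 0 < η₂)
    (h3a : ∀ t ξ, R ≤ pairNorm t ξ → A t ξ ≤ η₁ * ⟪gradA A t ξ, ξ⟫)
    (h3b : ∀ t ξ, pairNorm t ξ ≤ R → |A t ξ| ≤ η₂)
    -- (h4)
    (hμ₁ : 0 < μ₁)
    (h4 : ∀ t ξ, R ≤ pairNorm t ξ →
      μ₁ * ⟪gradA A t ξ, ξ⟫ ≤ ⟪gradA A t ξ, ξ⟫ + Adert A t ξ * t)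
    -- (h5)
    (hθ : 0 < θ) (hθp : θ < 1 / p) (hμ₂ : 0 < μ₂)
    (h5 : ∀ t ξ, R ≤ pairNorm t ξ →
      μ₂ * ⟪gradA A t ξ, ξ⟫ ≤
        A t ξ - θ * ⟪gradA A t ξ, ξ⟫ - θ * (Adert A t ξ * t)) :
    ∀ t ξ, R ≤ pairNorm t ξ → ∀ s : ℝ, 1 ≤ s →
      A (s * t) (s • ξ) ≤ s ^ ((1 / θ) * (1 - μ₂ / η₁)) * A t ξ := by
  intro t ξ hRtξ s hs
  have hspos : (0 : ℝ) < s := lt_of_lt_of_le one_pos hs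
  set α : ℝ := (1 / θ) * (1 - μ₂ / η₁) with hα
  set g : ℝ → ℝ := fun u => A (u * t) (u • ξ) with hg
  -- scaling of pairNorm
  have hscale : ∀ u : ℝ, 1 ≤ u → R ≤ pairNorm (u * t) (u • ξ) := by
    intro u hu
    have hu0 : (0 : ℝ) ≤ u := le_trans zero_le_one hu
    have : pairNorm (u * t) (u • ξ) = u * pairNorm t ξ := by
      unfold pairNorm
      rw [norm_smul]
      rw [show (u * t) ^ 2 + (‖u‖ * ‖ξ‖) ^ 2 = u ^ 2 * (t ^ 2 + ‖ξ‖ ^ 2) by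
        rw [Real.norm_eq_abs, mul_pow, mul_pow, sq_abs]; ring]
      rw [Real.sqrt_mul (by positivity), Real.sqrt_sq hu0]
    rw [this]
    calc R = 1 * R := (one_mul R).symm
      _ ≤ u * pairNorm t ξ := by
          apply mul_le_mul hu hRtξ (le_trans zero_le_one hR) hu0
  -- key differential inequality
  have hkey : ∀ u : ℝ, 1 ≤ u →
      ⟪gradA A (u * t) (u • ξ), ξ⟫ + Adert A (u * t) (u • ξ) * t ≤ α * g u / u := by
    intro u hu
    have hu0 : (0 : ℝ) < u := lt_of_lt_of_le one_pos hu
    have hpn := hscale u hu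
    set T := u * t with hT
    set X := u • ξ with hX
    set I : ℝ := ⟪gradA A T X, X⟫ with hI
    have hInn : I = u * ⟪gradA A T X, ξ⟫ := real_inner_smul_right _ _ _
    have hI0 : 0 ≤ I := le_trans (by positivity) (h2 T X)
    have h5' := h5 T X hpn
    have h3' := h3a T X hpn
    -- μ₂/η₁ * A ≤ μ₂ I
    have hdiv : μ₂ / η₁ * A T X ≤ μ₂ * I := by
      rw [div_mul_eq_mul_div, div_le_iff₀ hη₁]
      nlinarith
    -- θ * (I + Adert T X * T) ≤ (1 - μ₂/η₁) * A T X
    have hmain : θ * (I + Adert A T X * T) ≤ (1 - μ₂ / η₁) * (g u) := by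
      have hgu : g u = A T X := rfl
      rw [hgu]; nlinarith
    -- convert: I + Adert * T = u * (⟪grad, ξ⟫ + Adert * t)
    have hconv : (⟪gradA A T X, ξ⟫ + Adert A T X * t) * u = I + Adert A T X * T := by
      rw [hInn, hT]; ring
    rw [le_div_iff₀ hu0, hconv, hα]
    rw [show 1 / θ * (1 - μ₂ / η₁) * g u = (1 - μ₂ / η₁) * g u / θ by ring]
    rw [le_div_iff₀ hθ]
    nlinarith [hmain]
  -- the auxiliary function
  set φ : ℝ → ℝ := fun u => g u * u ^ (-α) with hφ
  have hder : ∀ u : ℝ, 0 < u → HasDerivAt φ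
      ((⟪gradA A (u * t) (u • ξ), ξ⟫ + Adert A (u * t) (u • ξ) * t) * u ^ (-α)
        + g u * (-α * u ^ (-α - 1))) u := by
    intro u hu
    exact (hasDerivAt_line A hA t ξ u).mul
      (Real.hasDerivAt_rpow_const (Or.inl (ne_of_gt hu)))
  have hgcont : Continuous g := by
    have hFc : Continuous (fun q : ℝ × EuclideanSpace ℝ (Fin N) => A q.1 q.2) :=
      hA.continuous
    exact hFc.comp ((continuous_id.mul continuous_const).prodMk
      (continuous_id.smul continuous_const))
  have hanti : AntitoneOn φ (Set.Ici 1) := by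
    apply antitoneOn_of_deriv_nonpos (convex_Ici 1)
    · exact hgcont.continuousOn.mul (continuousOn_id.rpow_const
        (fun x hx => Or.inl (ne_of_gt (lt_of_lt_of_le one_pos hx))))
    · intro x hx
      rw [interior_Ici] at hx
      exact ((hder x (lt_trans one_pos hx)).differentiableAt).differentiableWithinAt
    · intro x hx
      rw [interior_Ici] at hx
      have hx1 : (1 : ℝ) < x := hx
      have hx0 : (0 : ℝ) < x := lt_trans one_pos hx1
      rw [(hder x hx0).deriv]
      have hb := hkey x (le_of_lt hx1)
      have hrpos : (0 : ℝ) < x ^ (-α) := Real.rpow_pos_of_pos hx0 _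
      have hsplit : x ^ (-α - 1) = x ^ (-α) / x := by
        rw [show -α - 1 = -α + (-1) from by ring, Real.rpow_add hx0, Real.rpow_neg_one]
        ring
      have h1 : (⟪gradA A (x * t) (x • ξ), ξ⟫ + Adert A (x * t) (x • ξ) * t) * x ^ (-α)
          ≤ (α * g x / x) * x ^ (-α) := by
        exact mul_le_mul_of_nonneg_right hb (le_of_lt hrpos)
      rw [hsplit]
      have hxne : x ≠ 0 := ne_of_gt hx0
      calc (⟪gradA A (x * t) (x • ξ), ξ⟫ + Adert A (x * t) (x • ξ) * t) * x ^ (-α)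
            + g x * (-α * (x ^ (-α) / x))
          ≤ (α * g x / x) * x ^ (-α) + g x * (-α * (x ^ (-α) / x)) := by linarith
        _ = 0 := by field_simp; ring
  -- conclude
  have hφs : φ s ≤ φ 1 := hanti (Set.self_mem_Ici) hs hs
  have hφ1 : φ 1 = A t ξ := by
    simp [hφ, hg, Real.one_rpow]
  have hφsval : φ s = g s * (s ^ α)⁻¹ := by
    show g s * s ^ (-α) = g s * (s ^ α)⁻¹
    rw [Real.rpow_neg (le_of_lt hspos)]
  have hpow : (0 : ℝ) < s ^ α := Real.rpow_pos_of_pos hspos _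
  have : g s * (s ^ α)⁻¹ ≤ A t ξ := by rw [← hφsval, ← hφ1]; exact hφs
  calc A (s * t) (s • ξ) = g s := rfl
    _ = (g s * (s ^ α)⁻¹) * s ^ α := by field_simp
    _ ≤ A t ξ * s ^ α := mul_le_mul_of_nonneg_right this (le_of_lt hpow)
    _ = s ^ α * A t ξ := mul_comm _ _
end

section
/- Assume A satisfies conditions (h2), (h3), (h4), (h5), assume moreover that |a(t, ξ)| ≤ Φ₂(t) + φ₂(t)|ξ|^{p−1} for all (t, ξ) with Φ₂, φ₂ : ℝ → ℝ positive continuous functions, and set α = (1/θ)(1 − μ₂/η₁); assume α − p > 0. Then there exist constants b₁*, b₂* > 0 such that for all (t, ξ) ∈ ℝ × ℝ^N one has |A(t, ξ)| ≤ b₁*(1 + |t|^α) + b₂*(1 + |t|^{α − p})|ξ|^p. -/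
open scoped RealInnerProductSpace

lemma inner_gradA {N : ℕ} (A : ℝ → EuclideanSpace ℝ (Fin N) → ℝ) (t : ℝ)
    (ξ v : EuclideanSpace ℝ (Fin N)) :
    ⟪gradA A t ξ, v⟫ = fderiv ℝ (A t) ξ v := by
  rw [gradA, gradient, InnerProductSpace.toDual_symm_apply]

lemma ray_hasDerivAt {N : ℕ} (A : ℝ → EuclideanSpace ℝ (Fin N) → ℝ)
    (hA : ContDiff ℝ 1 (fun q : ℝ × EuclideanSpace ℝ (Fin N) => A q.1 q.2))
    (t : ℝ) (ξ : EuclideanSpace ℝ (Fin N)) (s : ℝ) :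
    HasDerivAt (fun s : ℝ => A (s * t) (s • ξ))
      (Adert A (s * t) (s • ξ) * t + ⟪gradA A (s * t) (s • ξ), ξ⟫) s := by
  set f : ℝ × EuclideanSpace ℝ (Fin N) → ℝ := fun q => A q.1 q.2 with hf
  have hdf : Differentiable ℝ f := hA.differentiable one_ne_zero
  set q₀ : ℝ × EuclideanSpace ℝ (Fin N) := (s * t, s • ξ) with hq₀
  set D := fderiv ℝ f q₀ with hD
  have hD0 : HasFDerivAt f D q₀ := (hdf q₀).hasFDerivAt
  have hcurve : HasDerivAt (fun s : ℝ => ((s * t, s • ξ) : ℝ × EuclideanSpace ℝ (Fin N)))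
      ((t, ξ) : ℝ × EuclideanSpace ℝ (Fin N)) s := by
    have h1 : HasDerivAt (fun s : ℝ => s * t) t s := by
      simpa using (hasDerivAt_id s).mul_const t
    have h2 : HasDerivAt (fun s : ℝ => s • ξ) ξ s := by
      simpa using (hasDerivAt_id s).smul_const ξ
    exact HasDerivAt.prodMk h1 h2
  have hcomp := hD0.comp_hasDerivAt s hcurve
  have key1 : D (t, 0) = Adert A (s * t) (s • ξ) * t := by
    have hc1 : HasDerivAt (fun u : ℝ => ((u, s • ξ) : ℝ × EuclideanSpace ℝ (Fin N)))
        ((1, 0) : ℝ × EuclideanSpace ℝ (Fin N)) (s * t) :=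
      HasDerivAt.prodMk (hasDerivAt_id _) (hasDerivAt_const _ _)
    have hD1 : HasFDerivAt f D (s * t, s • ξ) := hD0
    have hder0 := hD1.comp_hasDerivAt (s * t) hc1
    have hder : Adert A (s * t) (s • ξ) = D (1, 0) := by
      have h' : HasDerivAt (fun u : ℝ => A u (s • ξ)) (D (1, 0)) (s * t) := hder0
      rw [Adert, h'.deriv]
    have hsm : ((t, (0 : EuclideanSpace ℝ (Fin N))) : ℝ × EuclideanSpace ℝ (Fin N))
        = t • ((1, 0) : ℝ × EuclideanSpace ℝ (Fin N)) := by
      simp [Prod.ext_iff]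
    rw [hsm, D.map_smul, hder, smul_eq_mul, mul_comm]
  have key2 : D (0, ξ) = ⟪gradA A (s * t) (s • ξ), ξ⟫ := by
    have hc2 : HasFDerivAt (fun v : EuclideanSpace ℝ (Fin N) =>
        ((s * t, v) : ℝ × EuclideanSpace ℝ (Fin N)))
        (ContinuousLinearMap.inr ℝ ℝ (EuclideanSpace ℝ (Fin N))) (s • ξ) :=
      HasFDerivAt.prodMk (hasFDerivAt_const (s * t) _) (hasFDerivAt_id _)
    have hcomp2 : HasFDerivAt (A (s * t)) (D.comp (ContinuousLinearMap.inr ℝ ℝ _)) (s • ξ) :=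
      hD0.comp (s • ξ) hc2
    rw [inner_gradA, hcomp2.fderiv]
    simp
  have hsum : D (t, ξ) = Adert A (s * t) (s • ξ) * t + ⟪gradA A (s * t) (s • ξ), ξ⟫ := by
    have h' : ((t, ξ) : ℝ × EuclideanSpace ℝ (Fin N)) = (t, 0) + (0, ξ) := by
      simp [Prod.ext_iff]
    rw [h', D.map_add, key1, key2]
  rw [← hsum]
  exact hcomp

lemma gronwall_ray (α σ : ℝ) (hσ0 : 0 < σ) (hσ1 : σ ≤ 1) (w w' : ℝ → ℝ)
    (hw : ∀ s, HasDerivAt w (w' s) s)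
    (hineq : ∀ s ∈ Set.Icc σ 1, s * w' s ≤ α * w s) :
    w 1 ≤ w σ * σ ^ (-α) := by
  set g : ℝ → ℝ := fun s => w s * s ^ (-α) with hg
  have hgd : ∀ s : ℝ, 0 < s →
      HasDerivAt g (w' s * s ^ (-α) + w s * (-α * s ^ (-α - 1))) s := by
    intro s hs
    exact (hw s).mul (Real.hasDerivAt_rpow_const (Or.inl hs.ne'))
  have hanti : AntitoneOn g (Set.Icc σ 1) := by
    apply antitoneOn_of_deriv_nonpos (convex_Icc _ _)
    · intro s hs
      have hs0 : 0 < s := lt_of_lt_of_le hσ0 hs.1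
      exact ((hgd s hs0).continuousAt).continuousWithinAt
    · intro s hs
      rw [interior_Icc] at hs
      exact ((hgd s (lt_of_lt_of_le hσ0 hs.1.le)).differentiableAt).differentiableWithinAt
    · intro s hs
      rw [interior_Icc] at hs
      have hs0 : 0 < s := lt_of_lt_of_le hσ0 hs.1.le
      rw [(hgd s hs0).deriv]
      have hsplit : s ^ (-α) = s * s ^ (-α - 1) := by
        rw [show s ^ (-α) = s ^ (1 + (-α - 1)) by norm_num, Real.rpow_add hs0, Real.rpow_one]
      have hpow : (0:ℝ) < s ^ (-α - 1) := Real.rpow_pos_of_pos hs0 _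
      have hi := hineq s ⟨hs.1.le, hs.2.le⟩
      calc w' s * s ^ (-α) + w s * (-α * s ^ (-α - 1))
          = (s * w' s - α * w s) * s ^ (-α - 1) := by rw [hsplit]; ring
        _ ≤ 0 := mul_nonpos_of_nonpos_of_nonneg (by linarith) hpow.le
  have h := hanti ⟨le_refl σ, hσ1⟩ ⟨hσ1, le_refl 1⟩ hσ1
  simpa [hg, Real.one_rpow] using h

lemma pn_abs_le {N : ℕ} (t : ℝ) (ξ : EuclideanSpace ℝ (Fin N)) : |t| ≤ pairNorm t ξ := by
  rw [pairNorm, ← Real.sqrt_sq_eq_abs]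
  exact Real.sqrt_le_sqrt (by nlinarith [sq_nonneg ‖ξ‖])

lemma x_le_one_add_rpow (p : ℝ) (hp : 1 ≤ p) (x : ℝ) (hx : 0 ≤ x) : x ≤ 1 + x ^ p := by
  rcases le_total x 1 with h | h
  · have : (0:ℝ) ≤ x ^ p := Real.rpow_nonneg hx p
    linarith
  · have h2 : x ^ (1:ℝ) ≤ x ^ p := Real.rpow_le_rpow_of_exponent_le h hp
    rw [Real.rpow_one] at h2
    linarith

set_option maxHeartbeats 1000000 in
theorem growth_estimate {N : ℕ} (hN : 2 ≤ N)
    (p R lam η₁ η₂ μ₁ θ μ₂ : ℝ) (hp : 1 < p) (hR : 1 ≤ R)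
    (A : ℝ → EuclideanSpace ℝ (Fin N) → ℝ)
    (hA : ContDiff ℝ 1 (fun q : ℝ × EuclideanSpace ℝ (Fin N) => A q.1 q.2))
    -- (h2)
    (hlam : 0 < lam)
    (h2 : ∀ t ξ, lam * ‖ξ‖ ^ p ≤ ⟪gradA A t ξ, ξ⟫)
    -- (h3)
    (hη₁ : 0 < η₁) (hη₂ : 0 < η₂)
    (h3a : ∀ t ξ, R ≤ pairNorm t ξ → A t ξ ≤ η₁ * ⟪gradA A t ξ, ξ⟫)
    (h3b : ∀ t ξ, pairNorm t ξ ≤ R → |A t ξ| ≤ η₂)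
    -- (h4)
    (hμ₁ : 0 < μ₁)
    (h4 : ∀ t ξ, R ≤ pairNorm t ξ →
      μ₁ * ⟪gradA A t ξ, ξ⟫ ≤ ⟪gradA A t ξ, ξ⟫ + Adert A t ξ * t)
    -- (h5)
    (hθ : 0 < θ) (hθp : θ < 1 / p) (hμ₂ : 0 < μ₂)
    (h5 : ∀ t ξ, R ≤ pairNorm t ξ →
      μ₂ * ⟪gradA A t ξ, ξ⟫ ≤
        A t ξ - θ * ⟪gradA A t ξ, ξ⟫ - θ * (Adert A t ξ * t))
    -- growth of `a`
    (Φ₂ φ₂ : ℝ → ℝ) (hΦ₂cont : Continuous Φ₂) (hφ₂cont : Continuous φ₂)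
    (hΦ₂pos : ∀ t, 0 < Φ₂ t) (hφ₂pos : ∀ t, 0 < φ₂ t)
    (hagrowth : ∀ t ξ, ‖gradA A t ξ‖ ≤ Φ₂ t + φ₂ t * ‖ξ‖ ^ (p - 1))
    -- the exponent `α`
    (α : ℝ) (hα : α = (1 / θ) * (1 - μ₂ / η₁)) (hαp : 0 < α - p) :
    ∃ b₁ b₂ : ℝ, 0 < b₁ ∧ 0 < b₂ ∧ ∀ t ξ,
      |A t ξ| ≤ b₁ * (1 + |t| ^ α) + b₂ * (1 + |t| ^ (α - p)) * ‖ξ‖ ^ p := by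
  have hp0 : (0:ℝ) < p := lt_trans one_pos hp
  have hα0 : (0:ℝ) < α := by linarith
  have hθα : θ * α = 1 - μ₂ / η₁ := by rw [hα]; field_simp
  -- key pointwise inequality
  have key : ∀ t ξ, R ≤ pairNorm t ξ →
      0 ≤ A t ξ ∧ ⟪gradA A t ξ, ξ⟫ + Adert A t ξ * t ≤ α * A t ξ := by
    intro t ξ hRn
    have hP0 : 0 ≤ ⟪gradA A t ξ, ξ⟫ := le_trans (by positivity) (h2 t ξ)
    have h4' := h4 t ξ hRn
    have h5' := h5 t ξ hRn
    have h3' := h3a t ξ hRn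
    set P := ⟪gradA A t ξ, ξ⟫ with hPdef
    set Dt := Adert A t ξ * t with hDtdef
    have h01 : θ * ((μ₁ - 1) * P) ≤ θ * Dt := mul_le_mul_of_nonneg_left (by linarith) hθ.le
    have h02 : 0 ≤ (μ₂ + θ * μ₁) * P := mul_nonneg (by positivity) hP0
    have hA0 : 0 ≤ A t ξ := by nlinarith [h5', h01, h02]
    refine ⟨hA0, ?_⟩
    have hμP : μ₂ / η₁ * A t ξ ≤ μ₂ * P := by
      rw [div_mul_eq_mul_div, div_le_iff₀ hη₁]
      nlinarith [mul_le_mul_of_nonneg_left h3' hμ₂.le]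
    have hfin : θ * (P + Dt) ≤ θ * (α * A t ξ) := by
      have hstep : θ * (P + Dt) ≤ A t ξ - μ₂ * P := by nlinarith [h5']
      have hstep2 : A t ξ - μ₂ * P ≤ (1 - μ₂ / η₁) * A t ξ := by nlinarith [hμP]
      calc θ * (P + Dt) ≤ (1 - μ₂ / η₁) * A t ξ := le_trans hstep hstep2
        _ = θ * α * A t ξ := by rw [hθα]
        _ = θ * (α * A t ξ) := by ring
    exact le_of_mul_le_mul_left hfin hθ
  -- bound for Φ₂, φ₂ on [-R, R]
  obtain ⟨x₁, hx₁m, hx₁⟩ := isCompact_Icc.exists_isMaxOn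
    (Set.nonempty_Icc.2 (by linarith : -R ≤ R)) hΦ₂cont.continuousOn
  obtain ⟨x₂, hx₂m, hx₂⟩ := isCompact_Icc.exists_isMaxOn
    (Set.nonempty_Icc.2 (by linarith : -R ≤ R)) hφ₂cont.continuousOn
  set M := max (Φ₂ x₁) (φ₂ x₂) with hMdef
  have hM0 : 0 < M := lt_of_lt_of_le (hΦ₂pos x₁) (le_max_left _ _)
  have hMΦ : ∀ u : ℝ, |u| ≤ R → Φ₂ u ≤ M := fun u hu =>
    (hx₁ (Set.mem_Icc.2 ⟨(abs_le.1 hu).1, (abs_le.1 hu).2⟩)).trans (le_max_left _ _)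
  have hMφ : ∀ u : ℝ, |u| ≤ R → φ₂ u ≤ M := fun u hu =>
    (hx₂ (Set.mem_Icc.2 ⟨(abs_le.1 hu).1, (abs_le.1 hu).2⟩)).trans (le_max_right _ _)
  -- the "strip" bound, for |t| ≤ R
  have strip : ∀ t ξ, |t| ≤ R → R ≤ pairNorm t ξ →
      A t ξ ≤ η₁ * M * (1 + 2 * ‖ξ‖ ^ p) := by
    intro t ξ ht hRn
    have hng : (0:ℝ) ≤ ‖ξ‖ := norm_nonneg ξ
    have hzp : (0:ℝ) ≤ ‖ξ‖ ^ (p - 1) := Real.rpow_nonneg hng _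
    have hmul : ‖ξ‖ ^ (p - 1) * ‖ξ‖ = ‖ξ‖ ^ p := by
      rw [show ‖ξ‖ ^ p = ‖ξ‖ ^ (p - 1 + 1) by rw [sub_add_cancel],
        Real.rpow_add' hng (by rw [sub_add_cancel]; exact hp0.ne'), Real.rpow_one]
    have hP : ⟪gradA A t ξ, ξ⟫ ≤ M * ‖ξ‖ + M * ‖ξ‖ ^ p := by
      calc ⟪gradA A t ξ, ξ⟫ ≤ ‖gradA A t ξ‖ * ‖ξ‖ := real_inner_le_norm _ _
        _ ≤ (M + M * ‖ξ‖ ^ (p - 1)) * ‖ξ‖ := by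
            apply mul_le_mul_of_nonneg_right _ hng
            have h1 := hMΦ t ht
            have h2 := hMφ t ht
            nlinarith [hagrowth t ξ, mul_le_mul_of_nonneg_right h2 hzp]
        _ = M * ‖ξ‖ + M * (‖ξ‖ ^ (p - 1) * ‖ξ‖) := by ring
        _ = M * ‖ξ‖ + M * ‖ξ‖ ^ p := by rw [hmul]
    have hxle : ‖ξ‖ ≤ 1 + ‖ξ‖ ^ p := x_le_one_add_rpow p hp.le ‖ξ‖ hng
    calc A t ξ ≤ η₁ * ⟪gradA A t ξ, ξ⟫ := h3a t ξ hRn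
      _ ≤ η₁ * (M * ‖ξ‖ + M * ‖ξ‖ ^ p) := mul_le_mul_of_nonneg_left hP hη₁.le
      _ ≤ η₁ * (M * (1 + ‖ξ‖ ^ p) + M * ‖ξ‖ ^ p) := by
          have h := mul_le_mul_of_nonneg_left hxle hM0.le
          apply mul_le_mul_of_nonneg_left _ hη₁.le
          linarith
      _ = η₁ * M * (1 + 2 * ‖ξ‖ ^ p) := by ring
  -- choose the constants
  refine ⟨η₂ + η₁ * M, 2 * η₁ * M, by positivity, by positivity, ?_⟩
  intro t ξ
  have h1α : (0:ℝ) ≤ |t| ^ α := Real.rpow_nonneg (abs_nonneg t) α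
  have h2α : (0:ℝ) ≤ |t| ^ (α - p) := Real.rpow_nonneg (abs_nonneg t) _
  have hξp : (0:ℝ) ≤ ‖ξ‖ ^ p := Real.rpow_nonneg (norm_nonneg ξ) p
  rcases le_total (pairNorm t ξ) R with hsmall | hbig
  · -- small pair norm
    have hb := h3b t ξ hsmall
    have habs : |A t ξ| ≤ η₂ := hb
    nlinarith [abs_nonneg (A t ξ), mul_nonneg (mul_nonneg hη₁.le hM0.le) h1α,
      mul_nonneg hη₂.le h1α, mul_nonneg (mul_nonneg (by positivity : (0:ℝ) ≤ 2 * η₁ * M)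
        (by linarith : (0:ℝ) ≤ 1 + |t| ^ (α - p))) hξp]
  · obtain ⟨hA0, -⟩ := key t ξ hbig
    rw [abs_of_nonneg hA0]
    rcases le_total |t| R with htR | htR
    · -- strip region
      have hs := strip t ξ htR hbig
      nlinarith [hs, mul_nonneg (mul_nonneg hη₁.le hM0.le) h1α, mul_nonneg hη₂.le h1α,
        mul_nonneg (mul_nonneg (by positivity : (0:ℝ) ≤ 2 * η₁ * M) h2α) hξp, hη₂, hM0, hη₁, hξp]
    · -- scaling region, |t| ≥ R
      have ht0 : (0:ℝ) < |t| := lt_of_lt_of_le (by linarith) htR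
      set σ := R / |t| with hσdef
      have hσ0 : 0 < σ := div_pos (by linarith) ht0
      have hσ1 : σ ≤ 1 := (div_le_one ht0).2 htR
      have hσt : |σ * t| = R := by
        rw [abs_mul, abs_of_pos hσ0, hσdef, div_mul_cancel₀ _ ht0.ne']
      have hineq : ∀ s ∈ Set.Icc σ 1,
          s * (Adert A (s * t) (s • ξ) * t + ⟪gradA A (s * t) (s • ξ), ξ⟫)
            ≤ α * A (s * t) (s • ξ) := by
        intro s hs
        have hs0 : 0 < s := lt_of_lt_of_le hσ0 hs.1
        have hpn : R ≤ pairNorm (s * t) (s • ξ) := by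
          refine le_trans ?_ (pn_abs_le (s * t) (s • ξ))
          rw [abs_mul, abs_of_pos hs0]
          calc R = σ * |t| := by rw [hσdef]; field_simp
            _ ≤ s * |t| := mul_le_mul_of_nonneg_right hs.1 (abs_nonneg t)
        have hk := (key (s * t) (s • ξ) hpn).2
        calc s * (Adert A (s * t) (s • ξ) * t + ⟪gradA A (s * t) (s • ξ), ξ⟫)
            = ⟪gradA A (s * t) (s • ξ), s • ξ⟫ + Adert A (s * t) (s • ξ) * (s * t) := by
              rw [real_inner_smul_right]; ring
          _ ≤ α * A (s * t) (s • ξ) := hk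
      have hG := gronwall_ray α σ hσ0 hσ1 (fun s => A (s * t) (s • ξ)) _
        (ray_hasDerivAt A hA t ξ) hineq
      simp only [one_mul, one_smul] at hG
      -- bound A (σ t, σ ξ)
      have hpnσ : R ≤ pairNorm (σ * t) (σ • ξ) := le_trans (le_of_eq hσt.symm) (pn_abs_le _ _)
      have hwσ := strip (σ * t) (σ • ξ) (le_of_eq hσt) hpnσ
      have hnσξ : ‖σ • ξ‖ ^ p = σ ^ p * ‖ξ‖ ^ p := by
        rw [norm_smul, Real.norm_eq_abs, abs_of_pos hσ0, Real.mul_rpow hσ0.le (norm_nonneg ξ)]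
      rw [hnσξ] at hwσ
      -- powers of σ
      have hσinv : σ⁻¹ = |t| / R := by rw [hσdef, inv_div]
      have hσnegα : σ ^ (-α) = (|t| / R) ^ α := by
        rw [Real.rpow_neg hσ0.le, ← Real.inv_rpow hσ0.le, hσinv]
      have hσmul : σ ^ p * σ ^ (-α) = (|t| / R) ^ (α - p) := by
        rw [← Real.rpow_add hσ0, show p + -α = -(α - p) by ring, Real.rpow_neg hσ0.le,
          ← Real.inv_rpow hσ0.le, hσinv]
      have hbound1 : (|t| / R) ^ α ≤ |t| ^ α :=
        Real.rpow_le_rpow (by positivity) (div_le_self (abs_nonneg t) hR) hα0.le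
      have hbound2 : (|t| / R) ^ (α - p) ≤ |t| ^ (α - p) :=
        Real.rpow_le_rpow (by positivity) (div_le_self (abs_nonneg t) hR) hαp.le
      have hσα : (0:ℝ) ≤ σ ^ (-α) := (Real.rpow_pos_of_pos hσ0 _).le
      have hchain : A t ξ ≤ η₁ * M * (1 + 2 * (σ ^ p * ‖ξ‖ ^ p)) * σ ^ (-α) :=
        le_trans hG (mul_le_mul_of_nonneg_right hwσ hσα)
      have hexpand : η₁ * M * (1 + 2 * (σ ^ p * ‖ξ‖ ^ p)) * σ ^ (-α)
          = η₁ * M * σ ^ (-α) + 2 * η₁ * M * (σ ^ p * σ ^ (-α)) * ‖ξ‖ ^ p := by ring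
      have hfinal : A t ξ ≤ η₁ * M * |t| ^ α + 2 * η₁ * M * |t| ^ (α - p) * ‖ξ‖ ^ p := by
        rw [hexpand, hσmul, hσnegα] at hchain
        have e1 : η₁ * M * (|t| / R) ^ α ≤ η₁ * M * |t| ^ α :=
          mul_le_mul_of_nonneg_left hbound1 (by positivity)
        have e2 : 2 * η₁ * M * (|t| / R) ^ (α - p) * ‖ξ‖ ^ p
            ≤ 2 * η₁ * M * |t| ^ (α - p) * ‖ξ‖ ^ p := by
          apply mul_le_mul_of_nonneg_right _ hξp
          exact mul_le_mul_of_nonneg_left hbound2 (by positivity)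
        linarith
      have e3 : 0 ≤ η₂ * |t| ^ α := mul_nonneg hη₂.le h1α
      have e4 : 0 ≤ 2 * η₁ * M * ‖ξ‖ ^ p :=
        mul_nonneg (by positivity : (0:ℝ) ≤ 2 * η₁ * M) hξp
      have e5 : 0 ≤ η₁ * M := by positivity
      nlinarith [hfinal, e3, e4, e5, hη₂]
end

section
/- Assume A satisfies conditions (h2), (h3), (h4), (h5). Then: (a) μ₁ ≤ 1; (b) for every (t, ξ) with |(t, ξ)| ≥ R one has A(t, ξ) ≥ (θμ₁ + μ₂) a(t, ξ)·ξ ≥ (θμ₁ + μ₂) λ |ξ|^p ≥ 0; (c) there exists a constant η₃ > 0 such that A(t, ξ) ≥ (θμ₁ + μ₂) λ |ξ|^p − η₃ for all (t, ξ) ∈ ℝ × ℝ^N. -/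
open scoped RealInnerProductSpace

/-! Along `t = 0`, (h4) reads `μ₁ a(0, ξ)·ξ ≤ a(0, ξ)·ξ`, and (h2) makes `a(0, ξ)·ξ` positive as
soon as `ξ ≠ 0`; this gives `μ₁ ≤ 1`. Adding (h5) to `θ` times (h4) cancels the `A_t` terms and
gives `A ≥ (θμ₁ + μ₂) a·ξ` outside the ball of radius `R`; inside the ball `A` is bounded by (h3),
and `|ξ|^p ≤ R^p` there, so `η₃ := η₂ + (θμ₁ + μ₂) λ R^p` works everywhere. -/

section PairNorm

variable {N : ℕ}

theorem norm_le_pairNorm (t : ℝ) (ξ : EuclideanSpace ℝ (Fin N)) : ‖ξ‖ ≤ pairNorm t ξ :=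
  Real.le_sqrt_of_sq_le (by nlinarith [sq_nonneg t])

theorem pairNorm_zero_left (ξ : EuclideanSpace ℝ (Fin N)) : pairNorm 0 ξ = ‖ξ‖ := by
  simp [pairNorm, Real.sqrt_sq (norm_nonneg ξ)]

theorem exists_norm_eq_of_pos (hN : 0 < N) {r : ℝ} (hr : 0 ≤ r) :
    ∃ ξ : EuclideanSpace ℝ (Fin N), ‖ξ‖ = r :=
  ⟨EuclideanSpace.single ⟨0, hN⟩ r, by simp [abs_of_nonneg hr]⟩

end PairNorm

section StructureConditions

variable {N : ℕ} {A : ℝ → EuclideanSpace ℝ (Fin N) → ℝ} {p R lam μ₁ θ μ₂ : ℝ}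

theorem le_one_of_coercive_of_h4 (hN : 0 < N) (hR : 0 < R) (hlam : 0 < lam)
    (h2 : ∀ t ξ, lam * ‖ξ‖ ^ p ≤ ⟪gradA A t ξ, ξ⟫)
    (h4 : ∀ t ξ, R ≤ pairNorm t ξ →
      μ₁ * ⟪gradA A t ξ, ξ⟫ ≤ ⟪gradA A t ξ, ξ⟫ + Adert A t ξ * t) :
    μ₁ ≤ 1 := by
  obtain ⟨ξ, hξ⟩ := exists_norm_eq_of_pos hN hR.le
  have hpos : 0 < ⟪gradA A 0 ξ, ξ⟫ :=
    lt_of_lt_of_le (by rw [hξ]; positivity) (h2 0 ξ)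
  have h4₀ := h4 0 ξ (by rw [pairNorm_zero_left, hξ])
  rw [mul_zero, add_zero] at h4₀
  exact (mul_le_iff_le_one_left hpos).mp h4₀

theorem mul_inner_gradA_le_of_h4_of_h5 (hθ : 0 ≤ θ) {t : ℝ} {ξ : EuclideanSpace ℝ (Fin N)}
    (h4 : μ₁ * ⟪gradA A t ξ, ξ⟫ ≤ ⟪gradA A t ξ, ξ⟫ + Adert A t ξ * t)
    (h5 : μ₂ * ⟪gradA A t ξ, ξ⟫ ≤ A t ξ - θ * ⟪gradA A t ξ, ξ⟫ - θ * (Adert A t ξ * t)) :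
    (θ * μ₁ + μ₂) * ⟪gradA A t ξ, ξ⟫ ≤ A t ξ := by
  nlinarith [mul_le_mul_of_nonneg_left h4 hθ]

theorem sub_le_of_le_outside_of_abs_le_inside {K η : ℝ} (hK : 0 ≤ K) (hp : 0 ≤ p)
    (hR : 0 ≤ R) (hη : 0 ≤ η)
    (houtside : ∀ t ξ, R ≤ pairNorm t ξ → K * ‖ξ‖ ^ p ≤ A t ξ)
    (hinside : ∀ t ξ, pairNorm t ξ ≤ R → |A t ξ| ≤ η) (t : ℝ) (ξ : EuclideanSpace ℝ (Fin N)) :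
    K * ‖ξ‖ ^ p - (η + K * R ^ p) ≤ A t ξ := by
  rcases le_total (pairNorm t ξ) R with hin | hout
  · have hpow : ‖ξ‖ ^ p ≤ R ^ p :=
      Real.rpow_le_rpow (norm_nonneg ξ) ((norm_le_pairNorm t ξ).trans hin) hp
    nlinarith [neg_abs_le (A t ξ), hinside t ξ hin]
  · have : 0 ≤ K * R ^ p := by positivity
    linarith [houtside t ξ hout]

end StructureConditions

theorem lower_bound_estimates_general {N : ℕ} (hN : 2 ≤ N)
    (p R lam η₂ μ₁ θ μ₂ : ℝ) (hp : 1 < p) (hR : 1 ≤ R)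
    (A : ℝ → EuclideanSpace ℝ (Fin N) → ℝ)
    -- (h2)
    (hlam : 0 < lam)
    (h2 : ∀ t ξ, lam * ‖ξ‖ ^ p ≤ ⟪gradA A t ξ, ξ⟫)
    -- (h3)
    (hη₂ : 0 < η₂)
    (h3b : ∀ t ξ, pairNorm t ξ ≤ R → |A t ξ| ≤ η₂)
    -- (h4)
    (hμ₁ : 0 < μ₁)
    (h4 : ∀ t ξ, R ≤ pairNorm t ξ →
      μ₁ * ⟪gradA A t ξ, ξ⟫ ≤ ⟪gradA A t ξ, ξ⟫ + Adert A t ξ * t)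
    -- (h5)
    (hθ : 0 < θ) (hμ₂ : 0 < μ₂)
    (h5 : ∀ t ξ, R ≤ pairNorm t ξ →
      μ₂ * ⟪gradA A t ξ, ξ⟫ ≤
        A t ξ - θ * ⟪gradA A t ξ, ξ⟫ - θ * (Adert A t ξ * t)) :
    -- (a)
    μ₁ ≤ 1 ∧
    -- (b)
    (∀ t ξ, R ≤ pairNorm t ξ →
      (θ * μ₁ + μ₂) * ⟪gradA A t ξ, ξ⟫ ≤ A t ξ ∧
      (θ * μ₁ + μ₂) * lam * ‖ξ‖ ^ p ≤ (θ * μ₁ + μ₂) * ⟪gradA A t ξ, ξ⟫ ∧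
      0 ≤ (θ * μ₁ + μ₂) * lam * ‖ξ‖ ^ p) ∧
    -- (c)
    (∃ η₃ : ℝ, 0 < η₃ ∧ ∀ t ξ,
      (θ * μ₁ + μ₂) * lam * ‖ξ‖ ^ p - η₃ ≤ A t ξ) := by
  have hc : 0 < θ * μ₁ + μ₂ := by positivity
  have hb : ∀ t ξ, R ≤ pairNorm t ξ →
      (θ * μ₁ + μ₂) * ⟪gradA A t ξ, ξ⟫ ≤ A t ξ ∧
      (θ * μ₁ + μ₂) * lam * ‖ξ‖ ^ p ≤ (θ * μ₁ + μ₂) * ⟪gradA A t ξ, ξ⟫ ∧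
      0 ≤ (θ * μ₁ + μ₂) * lam * ‖ξ‖ ^ p := fun t ξ hout =>
    ⟨mul_inner_gradA_le_of_h4_of_h5 hθ.le (h4 t ξ hout) (h5 t ξ hout),
      by rw [mul_assoc]; exact mul_le_mul_of_nonneg_left (h2 t ξ) hc.le,
      by positivity⟩
  refine ⟨le_one_of_coercive_of_h4 (by omega) (by linarith) hlam h2 h4, hb,
    η₂ + (θ * μ₁ + μ₂) * lam * R ^ p, by positivity, ?_⟩
  exact sub_le_of_le_outside_of_abs_le_inside (by positivity) (by linarith) (by linarith)
    hη₂.le (fun t ξ hout => (hb t ξ hout).2.1.trans (hb t ξ hout).1) h3b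

theorem lower_bound_estimates {N : ℕ} (hN : 2 ≤ N)
    (p R lam η₁ η₂ μ₁ θ μ₂ : ℝ) (hp : 1 < p) (hR : 1 ≤ R)
    (A : ℝ → EuclideanSpace ℝ (Fin N) → ℝ)
    (hA : ContDiff ℝ 1 (fun q : ℝ × EuclideanSpace ℝ (Fin N) => A q.1 q.2))
    -- (h2)
    (hlam : 0 < lam)
    (h2 : ∀ t ξ, lam * ‖ξ‖ ^ p ≤ ⟪gradA A t ξ, ξ⟫)
    -- (h3)
    (hη₁ : 0 < η₁) (hη₂ : 0 < η₂)
    (h3a : ∀ t ξ, R ≤ pairNorm t ξ → A t ξ ≤ η₁ * ⟪gradA A t ξ, ξ⟫)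
    (h3b : ∀ t ξ, pairNorm t ξ ≤ R → |A t ξ| ≤ η₂)
    -- (h4)
    (hμ₁ : 0 < μ₁)
    (h4 : ∀ t ξ, R ≤ pairNorm t ξ →
      μ₁ * ⟪gradA A t ξ, ξ⟫ ≤ ⟪gradA A t ξ, ξ⟫ + Adert A t ξ * t)
    -- (h5)
    (hθ : 0 < θ) (hθp : θ < 1 / p) (hμ₂ : 0 < μ₂)
    (h5 : ∀ t ξ, R ≤ pairNorm t ξ →
      μ₂ * ⟪gradA A t ξ, ξ⟫ ≤
        A t ξ - θ * ⟪gradA A t ξ, ξ⟫ - θ * (Adert A t ξ * t)) :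
    -- (a)
    μ₁ ≤ 1 ∧
    -- (b)
    (∀ t ξ, R ≤ pairNorm t ξ →
      (θ * μ₁ + μ₂) * ⟪gradA A t ξ, ξ⟫ ≤ A t ξ ∧
      (θ * μ₁ + μ₂) * lam * ‖ξ‖ ^ p ≤ (θ * μ₁ + μ₂) * ⟪gradA A t ξ, ξ⟫ ∧
      0 ≤ (θ * μ₁ + μ₂) * lam * ‖ξ‖ ^ p) ∧
    -- (c)
    (∃ η₃ : ℝ, 0 < η₃ ∧ ∀ t ξ,
      (θ * μ₁ + μ₂) * lam * ‖ξ‖ ^ p - η₃ ≤ A t ξ) :=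
  lower_bound_estimates_general hN p R lam η₂ μ₁ θ μ₂ hp hR A hlam h2 hη₂ h3b hμ₁ h4 hθ hμ₂ h5
end
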